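/- arXiv:2001.09390 — 3 statements merged into one kernel-verified Lean document; each statement's English description precedes it below -/
import Mathlib

section
/- Suppose ε = min_{m,m′} P(m,m′) > 0. Let (μ̂, P̂) be another pair with P̂ ∈ ℝ^{M×M} row-stochastic and all entries of μ̂ in (0,1), and let Ĥ denote the Bayesian belief update defined with (μ̂, P̂) in place of (μ, P). Fix any t ≥ 1, any action-reward sequence i_1,…,i_{t−1} ∈ {1,…,I}, r_1,…,r_{t−1} ∈ {0,1}, and a common initial belief b₁ ∈ B; let b_t (resp. b̂_t) be the belief at time t obtained by iterating H under (μ,P) (resp. Ĥ under (μ̂,P̂)) along this sequence. Then ‖b̂_t − b_t‖₁ ≤ L₁·‖μ̂ − μ‖₁ + L₂·‖P̂ − P‖_F, where L₁ = 4M((1−ε)/ε)² / min{μ_min, 1 − μ_max}, L₂ = 4M(1−ε)²/ε³ + √M, ‖μ̂ − μ‖₁ = max_{i} Σ_m |μ̂(m,i) − μ(m,i)| is the induced ℓ¹ matrix norm, ‖·‖_F is the Frobenius norm, and μ_max, μ_min are the maximum and minimum entries of μ. -/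
open Finset

/-- Membership in the belief simplex `B`. -/
def IsBelief {M : ℕ} (b : Fin M → ℝ) : Prop :=
  (∀ m, 0 ≤ b m) ∧ ∑ m, b m = 1

/-- ℓ¹ distance between two vectors. -/
noncomputable def l1 {M : ℕ} (b b' : Fin M → ℝ) : ℝ :=
  ∑ m, |b m - b' m|

/-- A row-stochastic matrix. -/
def RowStochastic {M : ℕ} (P : Fin M → Fin M → ℝ) : Prop :=
  (∀ m m', 0 ≤ P m m') ∧ ∀ m, ∑ m', P m m' = 1

/-- Bernoulli likelihood `p^r (1-p)^(1-r)` for `r ∈ {0,1}` (encoded as `Bool`). -/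
noncomputable def bern (p : ℝ) (r : Bool) : ℝ :=
  if r then p else 1 - p

/-- Bayesian belief update `H(b, i, r)`. -/
noncomputable def Hupd {M I : ℕ} (P : Fin M → Fin M → ℝ) (μ : Fin M → Fin I → ℝ)
    (b : Fin M → ℝ) (i : Fin I) (r : Bool) : Fin M → ℝ :=
  fun m => (∑ m', P m' m * (bern (μ m' i) r * b m')) /
    (∑ m'', bern (μ m'' i) r * b m'')

/-- Probability `p(r | b, i)` of observing reward `r` under belief `b` pulling arm `i`. -/
noncomputable def pObs {M I : ℕ} (μ : Fin M → Fin I → ℝ)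
    (b : Fin M → ℝ) (i : Fin I) (r : Bool) : ℝ :=
  ∑ m, bern (μ m i) r * b m

/-- `n`-step iterated Bayesian belief update `H^(n)(b, i_{1:n}, r_{1:n})`. -/
noncomputable def Hiter {M I : ℕ} (P : Fin M → Fin M → ℝ) (μ : Fin M → Fin I → ℝ) :
    (n : ℕ) → (Fin M → ℝ) → (Fin n → Fin I) → (Fin n → Bool) → (Fin M → ℝ)
  | 0, b, _, _ => b
  | n + 1, b, is, rs =>
      Hiter P μ n (Hupd P μ b (is 0) (rs 0)) (fun t => is t.succ) (fun t => rs t.succ)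

/-- Law `L(r_{1:n+1} | m, i_{1:n+1})` of a reward sequence of length `n+1`
given the initial hidden state `m`. -/
noncomputable def law {M I : ℕ} (P : Fin M → Fin M → ℝ) (μ : Fin M → Fin I → ℝ) :
    (n : ℕ) → Fin M → (Fin (n + 1) → Fin I) → (Fin (n + 1) → Bool) → ℝ
  | 0, m, is, rs => bern (μ m (is 0)) (rs 0)
  | n + 1, m, is, rs =>
      bern (μ m (is 0)) (rs 0) *
        ∑ m', P m m' * law P μ n m' (fun t => is t.succ) (fun t => rs t.succ)

/-- Law `Q^(n+1)(r_{1:n+1} | b, i_{1:n+1})` of a reward sequence of length `n+1`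
given the initial belief `b`. -/
noncomputable def Qlaw {M I : ℕ} (P : Fin M → Fin M → ℝ) (μ : Fin M → Fin I → ℝ)
    (n : ℕ) (b : Fin M → ℝ) (is : Fin (n + 1) → Fin I) (rs : Fin (n + 1) → Bool) : ℝ :=
  ∑ m, b m * law P μ n m is rs

section Aux

variable {M I : ℕ}

lemma bern_bounds {p : ℝ} (h : p ∈ Set.Ioo (0:ℝ) 1) (r : Bool) :
    0 < bern p r ∧ bern p r ≤ 1 := by
  cases r <;> simp [bern] <;> constructor <;> linarith [h.1, h.2]

lemma exists_pos_of_isBelief {b : Fin M → ℝ} (hb : IsBelief b) : ∃ m, 0 < b m := by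
  by_contra h
  push_neg at h
  have h2 : ∑ m, b m ≤ 0 := Finset.sum_nonpos (fun m _ => h m)
  rw [hb.2] at h2; linarith

lemma denom_pos {μ' : Fin M → Fin I → ℝ} (hμ' : ∀ m i, μ' m i ∈ Set.Ioo (0:ℝ) 1)
    {b : Fin M → ℝ} (hb : IsBelief b) (i : Fin I) (r : Bool) :
    0 < ∑ m, bern (μ' m i) r * b m := by
  obtain ⟨m₀, hm₀⟩ := exists_pos_of_isBelief hb
  have hterm : ∀ m ∈ Finset.univ, (0:ℝ) ≤ bern (μ' m i) r * b m := fun m _ =>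
    mul_nonneg (bern_bounds (hμ' m i) r).1.le (hb.1 m)
  have h0 : 0 < bern (μ' m₀ i) r * b m₀ := mul_pos (bern_bounds (hμ' m₀ i) r).1 hm₀
  exact lt_of_lt_of_le h0 (Finset.single_le_sum hterm (Finset.mem_univ m₀))

lemma hupd_isBelief {P' : Fin M → Fin M → ℝ} (hP' : RowStochastic P')
    {μ' : Fin M → Fin I → ℝ} (hμ' : ∀ m i, μ' m i ∈ Set.Ioo (0:ℝ) 1)
    {b : Fin M → ℝ} (hb : IsBelief b) (i : Fin I) (r : Bool) :
    IsBelief (Hupd P' μ' b i r) := by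
  have hS := denom_pos hμ' hb i r
  constructor
  · intro m
    apply div_nonneg _ hS.le
    exact Finset.sum_nonneg fun m' _ => mul_nonneg (hP'.1 m' m)
      (mul_nonneg (bern_bounds (hμ' m' i) r).1.le (hb.1 m'))
  · unfold Hupd
    rw [← Finset.sum_div, Finset.sum_comm]
    have : ∀ m' : Fin M, ∑ m, P' m' m * (bern (μ' m' i) r * b m')
        = bern (μ' m' i) r * b m' := by
      intro m'
      rw [← Finset.sum_mul, hP'.2 m', one_mul]
    rw [Finset.sum_congr rfl (fun m' _ => this m')]
    exact div_self hS.ne'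

lemma hupd_pos {P' : Fin M → Fin M → ℝ} (hP'pos : ∀ m m', 0 < P' m m')
    {μ' : Fin M → Fin I → ℝ} (hμ' : ∀ m i, μ' m i ∈ Set.Ioo (0:ℝ) 1)
    {b : Fin M → ℝ} (hb : IsBelief b) (i : Fin I) (r : Bool) :
    ∀ m, 0 < Hupd P' μ' b i r m := by
  intro m
  have hS := denom_pos hμ' hb i r
  apply div_pos _ hS
  obtain ⟨m₀, hm₀⟩ := exists_pos_of_isBelief hb
  have hterm : ∀ m' ∈ Finset.univ, (0:ℝ) ≤ P' m' m * (bern (μ' m' i) r * b m') := fun m' _ =>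
    mul_nonneg (hP'pos m' m).le (mul_nonneg (bern_bounds (hμ' m' i) r).1.le (hb.1 m'))
  have h0 : 0 < P' m₀ m * (bern (μ' m₀ i) r * b m₀) :=
    mul_pos (hP'pos m₀ m) (mul_pos (bern_bounds (hμ' m₀ i) r).1 hm₀)
  exact lt_of_lt_of_le h0 (Finset.single_le_sum hterm (Finset.mem_univ m₀))

/-- ratio sandwich: there are `0 < α`, `0 ≤ β` with `β ≤ X α` and `α q ≤ p ≤ β q`. -/
def RatLe {M : ℕ} (p q : Fin M → ℝ) (X : ℝ) : Prop :=
  ∃ α β : ℝ, 0 < α ∧ 0 ≤ β ∧ β ≤ X * α ∧ ∀ m, α * q m ≤ p m ∧ p m ≤ β * q m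

lemma RatLe.mono {p q : Fin M → ℝ} {X Y : ℝ} (h : RatLe p q X) (hXY : X ≤ Y) :
    RatLe p q Y := by
  obtain ⟨α, β, hα, hβ, hβX, hs⟩ := h
  exact ⟨α, β, hα, hβ, le_trans hβX (mul_le_mul_of_nonneg_right hXY hα.le), hs⟩

lemma RatLe.trans {p x q : Fin M → ℝ} {X Y : ℝ} (h1 : RatLe p x X) (h2 : RatLe x q Y) :
    RatLe p q (X * Y) := by
  obtain ⟨α₁, β₁, hα₁, hβ₁, hβX₁, hs₁⟩ := h1
  obtain ⟨α₂, β₂, hα₂, hβ₂, hβX₂, hs₂⟩ := h2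
  refine ⟨α₁ * α₂, β₁ * β₂, mul_pos hα₁ hα₂, mul_nonneg hβ₁ hβ₂, ?_, ?_⟩
  · have h1' : β₁ * β₂ ≤ (X * α₁) * β₂ := mul_le_mul_of_nonneg_right hβX₁ hβ₂
    have h2' : (X * α₁) * β₂ ≤ (X * α₁) * (Y * α₂) :=
      mul_le_mul_of_nonneg_left hβX₂ (le_trans hβ₁ hβX₁)
    calc β₁ * β₂ ≤ (X * α₁) * (Y * α₂) := le_trans h1' h2'
      _ = X * Y * (α₁ * α₂) := by ring
  · intro m
    constructor
    · calc α₁ * α₂ * q m = α₁ * (α₂ * q m) := by ring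
        _ ≤ α₁ * x m := mul_le_mul_of_nonneg_left (hs₂ m).1 hα₁.le
        _ ≤ p m := (hs₁ m).1
    · calc p m ≤ β₁ * x m := (hs₁ m).2
        _ ≤ β₁ * (β₂ * q m) := mul_le_mul_of_nonneg_left (hs₂ m).2 hβ₁
        _ = β₁ * β₂ * q m := by ring

lemma RatLe.div_div {x y : Fin M → ℝ} {X s t : ℝ} (h : RatLe x y X)
    (hs : 0 < s) (ht : 0 < t) :
    RatLe (fun m => x m / s) (fun m => y m / t) X := by
  obtain ⟨α, β, hα, hβ, hβX, hsw⟩ := h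
  refine ⟨α * t / s, β * t / s, by positivity, by positivity, ?_, ?_⟩
  · have h1 : β * t ≤ (X * α) * t := mul_le_mul_of_nonneg_right hβX ht.le
    have h2 : X * (α * t / s) = (X * α) * t / s := by ring
    rw [h2, div_le_div_iff₀ hs hs]
    nlinarith
  · intro m
    constructor
    · have h1 := mul_le_mul_of_nonneg_left (hsw m).1 (le_of_lt (by positivity : (0:ℝ) < t / s / t))
      calc α * t / s * (y m / t) = t / s / t * (α * y m) := by ring
        _ ≤ t / s / t * x m := h1
        _ = x m / s := by field_simp
    · have h1 := mul_le_mul_of_nonneg_left (hsw m).2 (le_of_lt (by positivity : (0:ℝ) < t / s / t))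
      calc x m / s = t / s / t * x m := by field_simp
        _ ≤ t / s / t * (β * y m) := h1
        _ = β * t / s * (y m / t) := by ring

lemma ratLe_l1 {p q : Fin M → ℝ} {X : ℝ} (hp : IsBelief p) (hq : IsBelief q)
    (hX : 1 ≤ X) (h : RatLe p q X) : l1 p q ≤ X - 1 := by
  obtain ⟨α, β, hα, hβ, hβX, hs⟩ := h
  have hα1 : α ≤ 1 := by
    have h1 : ∑ m, α * q m ≤ ∑ m, p m := Finset.sum_le_sum (fun m _ => (hs m).1)
    rw [← Finset.mul_sum, hq.2, hp.2, mul_one] at h1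
    exact h1
  have hβ1 : 1 ≤ β := by
    have h1 : ∑ m, p m ≤ ∑ m, β * q m := Finset.sum_le_sum (fun m _ => (hs m).2)
    rw [← Finset.mul_sum, hq.2, hp.2, mul_one] at h1
    exact h1
  have key : ∀ m, |p m - q m| ≤ (β - α) * q m := by
    intro m
    rw [abs_le]
    constructor
    · have := (hs m).1
      nlinarith [hq.1 m]
    · have := (hs m).2
      nlinarith [hq.1 m]
  calc l1 p q ≤ ∑ m, (β - α) * q m := Finset.sum_le_sum (fun m _ => key m)
    _ = β - α := by rw [← Finset.mul_sum, hq.2, mul_one]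
    _ ≤ X * α - α := by linarith
    _ ≤ X - 1 := by nlinarith

end Aux
section Aux2

variable {M I : ℕ}

lemma hiter_isBelief {P' : Fin M → Fin M → ℝ} (hP' : RowStochastic P')
    {μ' : Fin M → Fin I → ℝ} (hμ' : ∀ m i, μ' m i ∈ Set.Ioo (0:ℝ) 1) :
    ∀ (n : ℕ) (is : Fin n → Fin I) (rs : Fin n → Bool) (b : Fin M → ℝ),
      IsBelief b → IsBelief (Hiter P' μ' n b is rs) := by
  intro n
  induction n with
  | zero => intro _ _ b hb; simpa [Hiter] using hb
  | succ k ih =>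
    intro is rs b hb
    rw [show Hiter P' μ' (k+1) b is rs
      = Hiter P' μ' k (Hupd P' μ' b (is 0) (rs 0)) (fun t => is t.succ)
        (fun t => rs t.succ) from rfl]
    exact ih _ _ _ (hupd_isBelief hP' hμ' hb _ _)

lemma l1_le_two {p q : Fin M → ℝ} (hp : IsBelief p) (hq : IsBelief q) : l1 p q ≤ 2 := by
  unfold l1
  calc ∑ m, |p m - q m| ≤ ∑ m, (p m + q m) := Finset.sum_le_sum (fun m _ => by
        rw [abs_le]; constructor <;> nlinarith [hp.1 m, hq.1 m])
    _ = 2 := by rw [Finset.sum_add_distrib, hp.2, hq.2]; norm_num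

end Aux2
section Contraction

variable {M : ℕ}

lemma ratLe_contraction (hM : 2 ≤ M) {K : Fin M → Fin M → ℝ} {ε : ℝ}
    (hε0 : 0 < ε) (hε2 : ε ≤ 1/2)
    (hK : ∀ m m', ε ≤ K m m' ∧ K m m' ≤ 1 - ε)
    {u v : Fin M → ℝ} (hv : ∀ m, 0 < v m)
    {α β X : ℝ} (hα : 0 < α) (hβX : β ≤ X * α) (hX1 : 1 ≤ X)
    (hs : ∀ k, α * v k ≤ u k ∧ u k ≤ β * v k) :
    RatLe (fun m => ∑ k, K k m * u k) (fun m => ∑ k, K k m * v k)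
      (1 + (1 - ε / (1 - ε)) * (X - 1)) := by
  haveI : NeZero M := ⟨by omega⟩
  have hε1 : ε < 1 := by linarith
  set lam : ℝ := ε / (1 - ε) with hlam
  have hlam0 : 0 < lam := div_pos hε0 (by linarith)
  have hlam1 : lam ≤ 1 := by
    rw [hlam, div_le_one (by linarith)]; linarith
  set C : ℝ := 1 + (1 - lam) * (X - 1) with hC
  have hC1 : 1 ≤ C := by nlinarith
  have hC0 : (0:ℝ) ≤ C := by linarith
  set y : Fin M → ℝ := fun m => ∑ k, K k m * u k with hy
  set z : Fin M → ℝ := fun m => ∑ k, K k m * v k with hz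
  have hαβ : α ≤ β := by
    have h0 := hs 0
    have hv0 := hv 0
    nlinarith [h0.1, h0.2]
  have hβ0 : 0 < β := lt_of_lt_of_le hα hαβ
  set V : ℝ := ∑ k, v k with hV
  have hVpos : 0 < V := Finset.sum_pos (fun k _ => hv k) Finset.univ_nonempty
  have hzlb : ∀ m, ε * V ≤ z m := by
    intro m
    rw [hV, Finset.mul_sum]
    exact Finset.sum_le_sum fun k _ => mul_le_mul_of_nonneg_right (hK k m).1 (hv k).le
  have hzub : ∀ m, z m ≤ (1 - ε) * V := by
    intro m
    rw [hV, Finset.mul_sum]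
    exact Finset.sum_le_sum fun k _ => mul_le_mul_of_nonneg_right (hK k m).2 (hv k).le
  have hzpos : ∀ m, 0 < z m := fun m => lt_of_lt_of_le (mul_pos hε0 hVpos) (hzlb m)
  have hylb : ∀ m, α * z m ≤ y m := by
    intro m
    rw [hz, Finset.mul_sum]
    refine Finset.sum_le_sum fun k _ => ?_
    have h1 : α * (K k m * v k) = K k m * (α * v k) := by ring
    rw [h1]
    exact mul_le_mul_of_nonneg_left (hs k).1 (le_trans hε0.le (hK k m).1)
  have hyub : ∀ m, y m ≤ β * z m := by
    intro m
    rw [hz, Finset.mul_sum]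
    refine Finset.sum_le_sum fun k _ => ?_
    have h1 : β * (K k m * v k) = K k m * (β * v k) := by ring
    rw [h1]
    exact mul_le_mul_of_nonneg_left (hs k).2 (le_trans hε0.le (hK k m).1)
  have hypos : ∀ m, 0 < y m := fun m => lt_of_lt_of_le (mul_pos hα (hzpos m)) (hylb m)
  -- pairwise key inequality
  have key : ∀ i j, y i * z j ≤ C * (y j * z i) := by
    intro i j
    set σ : ℝ := ∑ k, min (K k i) (K k j) * v k with hσ
    set μt : ℝ := ∑ k, min (K k i) (K k j) * u k with hμt
    have hminlb : ∀ k, ε ≤ min (K k i) (K k j) := fun k => le_min (hK k i).1 (hK k j).1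
    have hσlb : ε * V ≤ σ := by
      rw [hσ, hV, Finset.mul_sum]
      exact Finset.sum_le_sum fun k _ => mul_le_mul_of_nonneg_right (hminlb k) (hv k).le
    have hσpos : 0 < σ := lt_of_lt_of_le (mul_pos hε0 hVpos) hσlb
    have hσub_i : σ ≤ z i := Finset.sum_le_sum fun k _ =>
      mul_le_mul_of_nonneg_right (min_le_left _ _) (hv k).le
    have hσub_j : σ ≤ z j := Finset.sum_le_sum fun k _ =>
      mul_le_mul_of_nonneg_right (min_le_right _ _) (hv k).le
    have hlame : lam * (1 - ε) = ε := by
      rw [hlam]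
      exact div_mul_cancel₀ ε (by linarith : (1:ℝ) - ε ≠ 0)
    have hgap_i : lam * z i ≤ σ := by
      have h1 : lam * z i ≤ lam * ((1 - ε) * V) :=
        mul_le_mul_of_nonneg_left (hzub i) hlam0.le
      have h2 : lam * ((1 - ε) * V) = ε * V := by
        calc lam * ((1 - ε) * V) = (lam * (1 - ε)) * V := by ring
          _ = ε * V := by rw [hlame]
      linarith
    have hgap_j : lam * z j ≤ σ := by
      have h1 : lam * z j ≤ lam * ((1 - ε) * V) :=
        mul_le_mul_of_nonneg_left (hzub j) hlam0.le
      have h2 : lam * ((1 - ε) * V) = ε * V := by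
        calc lam * ((1 - ε) * V) = (lam * (1 - ε)) * V := by ring
          _ = ε * V := by rw [hlame]
      linarith
    have hμtα : α * σ ≤ μt := by
      rw [hσ, hμt, Finset.mul_sum]
      refine Finset.sum_le_sum fun k _ => ?_
      have h1 : α * (min (K k i) (K k j) * v k) = min (K k i) (K k j) * (α * v k) := by ring
      rw [h1]
      exact mul_le_mul_of_nonneg_left (hs k).1 (le_trans hε0.le (hminlb k))
    have hμtβ : μt ≤ β * σ := by
      rw [hσ, hμt, Finset.mul_sum]
      refine Finset.sum_le_sum fun k _ => ?_
      have h1 : β * (min (K k i) (K k j) * v k) = min (K k i) (K k j) * (β * v k) := by ring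
      rw [h1]
      exact mul_le_mul_of_nonneg_left (hs k).2 (le_trans hε0.le (hminlb k))
    have h1 : y i ≤ μt + β * (z i - σ) := by
      have hterm : ∀ k ∈ Finset.univ,
          K k i * u k ≤ min (K k i) (K k j) * u k
            + (β * (K k i * v k) - β * (min (K k i) (K k j) * v k)) := by
        intro k _
        have h0 : 0 ≤ K k i - min (K k i) (K k j) := sub_nonneg.2 (min_le_left _ _)
        have := mul_le_mul_of_nonneg_left (hs k).2 h0
        nlinarith
      have hsum := Finset.sum_le_sum hterm
      rw [Finset.sum_add_distrib, Finset.sum_sub_distrib, ← Finset.mul_sum, ← Finset.mul_sum]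
        at hsum
      have : y i = ∑ k, K k i * u k := rfl
      rw [this]
      calc ∑ k, K k i * u k ≤ μt + (β * z i - β * σ) := hsum
        _ = μt + β * (z i - σ) := by ring
    have h2 : μt + α * (z j - σ) ≤ y j := by
      have hterm : ∀ k ∈ Finset.univ,
          min (K k i) (K k j) * u k
            + (α * (K k j * v k) - α * (min (K k i) (K k j) * v k)) ≤ K k j * u k := by
        intro k _
        have h0 : 0 ≤ K k j - min (K k i) (K k j) := sub_nonneg.2 (min_le_right _ _)
        have := mul_le_mul_of_nonneg_left (hs k).1 h0
        nlinarith
      have hsum := Finset.sum_le_sum hterm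
      rw [Finset.sum_add_distrib, Finset.sum_sub_distrib, ← Finset.mul_sum, ← Finset.mul_sum]
        at hsum
      have hyj : y j = ∑ k, K k j * u k := rfl
      rw [hyj]
      calc μt + α * (z j - σ) = μt + (α * z j - α * σ) := by ring
        _ ≤ ∑ k, K k j * u k := hsum
    -- scalar inequality
    have scalar : (1 - lam) * β * σ + lam * μt ≤ C * ((1 - lam) * α * σ + lam * μt) := by
      have e1 : 0 ≤ σ * (X * α - β) + lam * (X - 1) * (μt - α * σ) := by
        have t1 : 0 ≤ σ * (X * α - β) := mul_nonneg hσpos.le (by linarith)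
        have t2 : 0 ≤ lam * (X - 1) * (μt - α * σ) :=
          mul_nonneg (mul_nonneg hlam0.le (by linarith)) (by linarith)
        linarith
      have e2 : 0 ≤ (1 - lam) * (σ * (X * α - β) + lam * (X - 1) * (μt - α * σ)) :=
        mul_nonneg (by linarith) e1
      have expand : C * ((1 - lam) * α * σ + lam * μt) - ((1 - lam) * β * σ + lam * μt)
          = (1 - lam) * (σ * (X * α - β) + lam * (X - 1) * (μt - α * σ)) := by
        rw [hC]; ring
      linarith [expand, e2]
    -- step A
    have stepA : σ * (μt + β * (z i - σ)) ≤ ((1 - lam) * β * σ + lam * μt) * z i := by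
      have e1 : 0 ≤ (β * σ - μt) * (σ - lam * z i) :=
        mul_nonneg (by linarith) (by linarith)
      have expand : ((1 - lam) * β * σ + lam * μt) * z i - σ * (μt + β * (z i - σ))
          = (β * σ - μt) * (σ - lam * z i) := by ring
      linarith [expand, e1]
    -- step B
    have stepB : ((1 - lam) * α * σ + lam * μt) * z j ≤ σ * (μt + α * (z j - σ)) := by
      have e1 : 0 ≤ (μt - α * σ) * (σ - lam * z j) :=
        mul_nonneg (by linarith) (by linarith)
      have expand : σ * (μt + α * (z j - σ)) - ((1 - lam) * α * σ + lam * μt) * z j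
          = (μt - α * σ) * (σ - lam * z j) := by ring
      linarith [expand, e1]
    -- combine
    have hzz : (0:ℝ) ≤ z i * z j := mul_nonneg (hzpos i).le (hzpos j).le
    have d1 : σ * (y i * z j) ≤ σ * ((μt + β * (z i - σ)) * z j) :=
      mul_le_mul_of_nonneg_left
        (mul_le_mul_of_nonneg_right h1 (hzpos j).le) hσpos.le
    have d2 : σ * ((μt + β * (z i - σ)) * z j)
        ≤ (((1 - lam) * β * σ + lam * μt) * z i) * z j := by
      have := mul_le_mul_of_nonneg_right stepA (hzpos j).le
      calc σ * ((μt + β * (z i - σ)) * z j) = σ * (μt + β * (z i - σ)) * z j := by ring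
        _ ≤ (((1 - lam) * β * σ + lam * μt) * z i) * z j := this
    have d3 : (((1 - lam) * β * σ + lam * μt) * z i) * z j
        ≤ (C * ((1 - lam) * α * σ + lam * μt)) * (z i * z j) := by
      have := mul_le_mul_of_nonneg_right scalar hzz
      calc (((1 - lam) * β * σ + lam * μt) * z i) * z j
          = ((1 - lam) * β * σ + lam * μt) * (z i * z j) := by ring
        _ ≤ (C * ((1 - lam) * α * σ + lam * μt)) * (z i * z j) := this
    have d4 : (C * ((1 - lam) * α * σ + lam * μt)) * (z i * z j)
        ≤ C * (σ * (μt + α * (z j - σ))) * z i := by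
      have e := mul_le_mul_of_nonneg_right
        (mul_le_mul_of_nonneg_left stepB hC0) (hzpos i).le
      calc (C * ((1 - lam) * α * σ + lam * μt)) * (z i * z j)
          = C * (((1 - lam) * α * σ + lam * μt) * z j) * z i := by ring
        _ ≤ C * (σ * (μt + α * (z j - σ))) * z i := e
    have d5 : C * (σ * (μt + α * (z j - σ))) * z i ≤ C * (σ * y j) * z i := by
      have h4 : σ * (μt + α * (z j - σ)) ≤ σ * y j := mul_le_mul_of_nonneg_left h2 hσpos.le
      exact mul_le_mul_of_nonneg_right (mul_le_mul_of_nonneg_left h4 hC0) (hzpos i).le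
    have final : σ * (y i * z j) ≤ σ * (C * (y j * z i)) := by
      have e : C * (σ * y j) * z i = σ * (C * (y j * z i)) := by ring
      linarith [d1, d2, d3, d4, d5, e]
    exact le_of_mul_le_mul_left final hσpos
  -- build witnesses from the argmin
  obtain ⟨j₀, -, hj₀⟩ := Finset.exists_min_image Finset.univ (fun m => y m / z m)
    ⟨0, Finset.mem_univ 0⟩
  refine ⟨y j₀ / z j₀, C * (y j₀ / z j₀), div_pos (hypos j₀) (hzpos j₀),
    mul_nonneg hC0 (div_pos (hypos j₀) (hzpos j₀)).le, le_of_eq rfl, ?_⟩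
  intro m
  constructor
  · have h1 : y j₀ / z j₀ ≤ y m / z m := hj₀ m (Finset.mem_univ m)
    rw [div_le_div_iff₀ (hzpos j₀) (hzpos m)] at h1
    rw [div_mul_eq_mul_div, div_le_iff₀ (hzpos j₀)]
    linarith [h1]
  · have h1 := key m j₀
    have h2 : C * (y j₀ / z j₀) * z m = C * (y j₀ * z m) / z j₀ := by ring
    rw [h2, le_div_iff₀ (hzpos j₀)]
    linarith [h1]

end Contraction
section ParamStep

variable {M I : ℕ}

lemma ratLe_hupd_param {P' Ph : Fin M → Fin M → ℝ} {μ' μh : Fin M → Fin I → ℝ}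
    {b : Fin M → ℝ} (hb0 : ∀ m, 0 ≤ b m) {i : Fin I} {r : Bool}
    {aP bP aw bw : ℝ} (haP : 0 < aP) (haw : 0 < aw) (hbP : 0 < bP) (hbw : 0 < bw)
    (hP0 : ∀ m m', 0 ≤ P' m m')
    (hPc : ∀ m m', aP * P' m m' ≤ Ph m m' ∧ Ph m m' ≤ bP * P' m m')
    (hw0 : ∀ m, 0 ≤ bern (μ' m i) r)
    (hwc : ∀ m, aw * bern (μ' m i) r ≤ bern (μh m i) r ∧
        bern (μh m i) r ≤ bw * bern (μ' m i) r)
    (hS : 0 < ∑ m, bern (μ' m i) r * b m) (hSh : 0 < ∑ m, bern (μh m i) r * b m) :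
    RatLe (Hupd Ph μh b i r) (Hupd P' μ' b i r) ((bP * bw) / (aP * aw)) := by
  have hnum : ∀ m, aP * aw * (∑ m', P' m' m * (bern (μ' m' i) r * b m'))
      ≤ ∑ m', Ph m' m * (bern (μh m' i) r * b m') := by
    intro m
    rw [Finset.mul_sum]
    refine Finset.sum_le_sum fun m' _ => ?_
    have h1 : (aP * P' m' m) * (aw * bern (μ' m' i) r) ≤ Ph m' m * bern (μh m' i) r := by
      apply mul_le_mul (hPc m' m).1 (hwc m').1 (mul_nonneg haw.le (hw0 m'))
      exact le_trans (mul_nonneg haP.le (hP0 m' m)) (hPc m' m).1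
    calc aP * aw * (P' m' m * (bern (μ' m' i) r * b m'))
        = ((aP * P' m' m) * (aw * bern (μ' m' i) r)) * b m' := by ring
      _ ≤ (Ph m' m * bern (μh m' i) r) * b m' :=
          mul_le_mul_of_nonneg_right h1 (hb0 m')
      _ = Ph m' m * (bern (μh m' i) r * b m') := by ring
  have hnum' : ∀ m, ∑ m', Ph m' m * (bern (μh m' i) r * b m')
      ≤ bP * bw * (∑ m', P' m' m * (bern (μ' m' i) r * b m')) := by
    intro m
    rw [Finset.mul_sum]
    refine Finset.sum_le_sum fun m' _ => ?_
    have h1 : Ph m' m * bern (μh m' i) r ≤ (bP * P' m' m) * (bw * bern (μ' m' i) r) := by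
      apply mul_le_mul (hPc m' m).2 (hwc m').2 ?_ ?_
      · exact le_trans (mul_nonneg haw.le (hw0 m')) (hwc m').1
      · exact mul_nonneg hbP.le (hP0 m' m)
    calc Ph m' m * (bern (μh m' i) r * b m')
        = (Ph m' m * bern (μh m' i) r) * b m' := by ring
      _ ≤ ((bP * P' m' m) * (bw * bern (μ' m' i) r)) * b m' :=
          mul_le_mul_of_nonneg_right h1 (hb0 m')
      _ = bP * bw * (P' m' m * (bern (μ' m' i) r * b m')) := by ring
  set S : ℝ := ∑ m, bern (μ' m i) r * b m with hSdef
  set Sh : ℝ := ∑ m, bern (μh m i) r * b m with hShdef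
  refine ⟨aP * aw * S / Sh, bP * bw * S / Sh, by positivity, by positivity, ?_, ?_⟩
  · apply le_of_eq
    field_simp
  · intro m
    have hrewh : Hupd Ph μh b i r m = (∑ m', Ph m' m * (bern (μh m' i) r * b m')) / Sh := rfl
    have hrew : Hupd P' μ' b i r m = (∑ m', P' m' m * (bern (μ' m' i) r * b m')) / S := rfl
    rw [hrewh, hrew]
    constructor
    · have h1 : aP * aw * S / Sh * ((∑ m', P' m' m * (bern (μ' m' i) r * b m')) / S)
          = (aP * aw * (∑ m', P' m' m * (bern (μ' m' i) r * b m'))) / Sh := by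
        field_simp
      rw [h1]
      exact (div_le_div_iff_of_pos_right hSh).mpr (hnum m)
    · have h1 : bP * bw * S / Sh * ((∑ m', P' m' m * (bern (μ' m' i) r * b m')) / S)
          = (bP * bw * (∑ m', P' m' m * (bern (μ' m' i) r * b m'))) / Sh := by
        field_simp
      rw [h1]
      exact (div_le_div_iff_of_pos_right hSh).mpr (hnum' m)

end ParamStep
set_option maxHeartbeats 2000000 in
/-- the belief error under estimated parameters is controlled by the
parameter estimation error, uniformly in time. -/
theorem belief_error_control {M I : ℕ} (hM : 2 ≤ M) (hI : 0 < I)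
    (P Phat : Fin M → Fin M → ℝ) (hP : RowStochastic P) (hPhat : RowStochastic Phat)
    (μ μhat : Fin M → Fin I → ℝ)
    (hμ : ∀ m i, μ m i ∈ Set.Ioo (0 : ℝ) 1)
    (hμhat : ∀ m i, μhat m i ∈ Set.Ioo (0 : ℝ) 1)
    (ε : ℝ) (hε : IsLeast (Set.range fun q : Fin M × Fin M => P q.1 q.2) ε)
    (hε0 : 0 < ε)
    (μmin μmax : ℝ)
    (hμmin : IsLeast (Set.range fun q : Fin M × Fin I => μ q.1 q.2) μmin)
    (hμmax : IsGreatest (Set.range fun q : Fin M × Fin I => μ q.1 q.2) μmax)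
    (L₁ L₂ : ℝ)
    (hL₁ : L₁ = 4 * M * ((1 - ε) / ε) ^ 2 / min μmin (1 - μmax))
    (hL₂ : L₂ = 4 * M * (1 - ε) ^ 2 / ε ^ 3 + Real.sqrt M)
    (n : ℕ) (is : Fin n → Fin I) (rs : Fin n → Bool)
    (b₁ : Fin M → ℝ) (hb₁ : IsBelief b₁) :
    l1 (Hiter Phat μhat n b₁ is rs) (Hiter P μ n b₁ is rs) ≤
      L₁ * (Finset.univ.sup' ⟨⟨0, hI⟩, Finset.mem_univ _⟩ fun i =>
          ∑ m, |μhat m i - μ m i|) +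
      L₂ * Real.sqrt (∑ m, ∑ m', (Phat m m' - P m m') ^ 2) := by
  haveI : NeZero M := ⟨by omega⟩
  haveI : Nontrivial (Fin M) := Fin.nontrivial_iff_two_le.mpr hM
  set dμ : ℝ := Finset.univ.sup' ⟨⟨0, hI⟩, Finset.mem_univ _⟩
    (fun i => ∑ m, |μhat m i - μ m i|) with hdμdef
  set dP : ℝ := Real.sqrt (∑ m, ∑ m', (Phat m m' - P m m') ^ 2) with hdPdef
  -- basic bounds on P
  have hPlb : ∀ m m', ε ≤ P m m' := fun m m' => hε.2 ⟨(m, m'), rfl⟩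
  have hPpos : ∀ m m', 0 < P m m' := fun m m' => lt_of_lt_of_le hε0 (hPlb m m')
  have hM2 : (2:ℝ) ≤ (M:ℝ) := by exact_mod_cast hM
  have hMsum : (M:ℝ) * ε ≤ 1 := by
    have h1 : ∑ _m' : Fin M, ε ≤ ∑ m', P 0 m' :=
      Finset.sum_le_sum (fun m' _ => hPlb 0 m')
    rw [Finset.sum_const, Finset.card_univ, Fintype.card_fin, nsmul_eq_mul, hP.2 0] at h1
    exact h1
  have hεhalf : ε ≤ 1/2 := by
    have h1 : 2 * ε ≤ (M:ℝ) * ε := mul_le_mul_of_nonneg_right hM2 hε0.le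
    linarith
  have hε1 : ε < 1 := by linarith
  have hPub : ∀ m m', P m m' ≤ 1 - ε := by
    intro m m'
    obtain ⟨k₀, hk₀⟩ := exists_ne m'
    have hpair : P m m' + P m k₀ = ∑ k ∈ ({m', k₀} : Finset (Fin M)), P m k :=
      (Finset.sum_pair (Ne.symm hk₀)).symm
    have hsub : ∑ k ∈ ({m', k₀} : Finset (Fin M)), P m k ≤ ∑ k, P m k :=
      Finset.sum_le_sum_of_subset_of_nonneg (Finset.subset_univ _)
        (fun k _ _ => hP.1 m k)
    rw [hP.2 m] at hsub
    have := hPlb m k₀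
    linarith
  have hKb : ∀ m m', ε ≤ P m m' ∧ P m m' ≤ 1 - ε := fun m m' => ⟨hPlb m m', hPub m m'⟩
  -- bounds on μ extremes
  have hμminpos : 0 < μmin := by
    obtain ⟨q, hq⟩ := hμmin.1
    rw [← hq]; exact (hμ q.1 q.2).1
  have hμmax1 : μmax < 1 := by
    obtain ⟨q, hq⟩ := hμmax.1
    rw [← hq]; exact (hμ q.1 q.2).2
  have hc₀ : 0 < min μmin (1 - μmax) := lt_min hμminpos (by linarith)
  have hwlb : ∀ m i r, min μmin (1 - μmax) ≤ bern (μ m i) r := by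
    intro m i r
    cases r
    · have h1 : μ m i ≤ μmax := hμmax.2 ⟨(m, i), rfl⟩
      calc min μmin (1 - μmax) ≤ 1 - μmax := min_le_right _ _
        _ ≤ bern (μ m i) false := by simp [bern]; linarith
    · have h1 : μmin ≤ μ m i := hμmin.2 ⟨(m, i), rfl⟩
      calc min μmin (1 - μmax) ≤ μmin := min_le_left _ _
        _ ≤ bern (μ m i) true := by simpa [bern] using h1
  -- deviation bounds
  have hΔμ : ∀ m i, |μhat m i - μ m i| ≤ dμ := by
    intro m i
    have h1 : ∑ m', |μhat m' i - μ m' i| ≤ dμ :=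
      Finset.le_sup' (fun i => ∑ m', |μhat m' i - μ m' i|) (Finset.mem_univ i)
    have h2 : |μhat m i - μ m i| ≤ ∑ m', |μhat m' i - μ m' i| :=
      Finset.single_le_sum (f := fun m' => |μhat m' i - μ m' i|)
        (fun m' _ => abs_nonneg _) (Finset.mem_univ m)
    linarith
  have hΔw : ∀ m i r, |bern (μhat m i) r - bern (μ m i) r| ≤ dμ := by
    intro m i r
    cases r
    · have h1 : bern (μhat m i) false - bern (μ m i) false = -(μhat m i - μ m i) := by
        simp [bern]
      rw [h1, abs_neg]; exact hΔμ m i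
    · simpa [bern] using hΔμ m i
  have hΔP : ∀ m m', |Phat m m' - P m m'| ≤ dP := by
    intro m m'
    have h2 : (Phat m m' - P m m')^2 ≤ ∑ b, (Phat m b - P m b)^2 :=
      Finset.single_le_sum (f := fun b => (Phat m b - P m b)^2)
        (fun b _ => sq_nonneg _) (Finset.mem_univ m')
    have h3 : ∑ b, (Phat m b - P m b)^2 ≤ ∑ a, ∑ b, (Phat a b - P a b)^2 :=
      Finset.single_le_sum (f := fun a => ∑ b, (Phat a b - P a b)^2)
        (fun a _ => Finset.sum_nonneg fun b _ => sq_nonneg _)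
        (Finset.mem_univ m)
    calc |Phat m m' - P m m'| = Real.sqrt ((Phat m m' - P m m')^2) :=
        (Real.sqrt_sq_eq_abs _).symm
      _ ≤ dP := Real.sqrt_le_sqrt (by linarith)
  have hdP0 : 0 ≤ dP := Real.sqrt_nonneg _
  have hdμ0 : 0 ≤ dμ := le_trans (abs_nonneg _) (hΔμ 0 ⟨0, hI⟩)
  -- the master constant
  set T : ℝ := 4 * M * ((1 - ε) / ε) ^ 2 with hTdef
  have hA1 : (1:ℝ) ≤ (1 - ε) / ε := by
    rw [le_div_iff₀ hε0]; linarith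
  have hA2 : (1:ℝ) ≤ ((1 - ε) / ε) ^ 2 := by
    have h1 : (1:ℝ)^2 ≤ ((1 - ε) / ε)^2 := pow_le_pow_left₀ (by norm_num) hA1 2
    simpa using h1
  have hT8 : (8:ℝ) ≤ T := by
    have h1 : (2:ℝ) * 1 ≤ (M:ℝ) * (((1 - ε) / ε) ^ 2) :=
      mul_le_mul hM2 hA2 zero_le_one (by linarith)
    rw [hTdef]; linarith
  have hTpos : 0 < T := by linarith
  have hcne : min μmin (1 - μmax) ≠ 0 := hc₀.ne'
  have h1me : (1:ℝ) - ε ≠ 0 := by linarith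
  have hTrμ : T * (dμ / min μmin (1 - μmax)) = L₁ * dμ := by
    rw [hL₁]; ring
  have hTrP : T * (dP / ε) = (L₂ - Real.sqrt M) * dP := by
    have h0 : L₂ - Real.sqrt M = T / ε := by
      rw [hL₂, hTdef, div_pow]
      field_simp
      ring
    rw [h0]; ring
  have hRHSineq : T * (dP / ε + dμ / min μmin (1 - μmax)) ≤ L₁ * dμ + L₂ * dP := by
    have h1 : 0 ≤ Real.sqrt M * dP := mul_nonneg (Real.sqrt_nonneg _) hdP0
    have h2 : T * (dP / ε + dμ / min μmin (1 - μmax))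
        = T * (dP / ε) + T * (dμ / min μmin (1 - μmax)) := by ring
    rw [h2, hTrP, hTrμ]; linarith
  have hL₁0 : 0 ≤ L₁ := by
    rw [hL₁]; positivity
  have hL₂0 : 0 ≤ L₂ := by
    rw [hL₂]; positivity
  have hRHS0 : 0 ≤ L₁ * dμ + L₂ * dP :=
    add_nonneg (mul_nonneg hL₁0 hdμ0) (mul_nonneg hL₂0 hdP0)
  -- dispatch trivial time-zero case
  rcases n with _ | k
  · rw [show Hiter Phat μhat 0 b₁ is rs = b₁ from rfl, show Hiter P μ 0 b₁ is rs = b₁ from rfl,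
      show l1 b₁ b₁ = 0 from by simp [l1]]
    exact hRHS0
  by_cases hcase : L₁ * dμ + L₂ * dP < 2
  swap
  · -- large-error case: trivial bound l1 ≤ 2
    push_neg at hcase
    have h1 := l1_le_two (hiter_isBelief hPhat hμhat (k+1) is rs b₁ hb₁)
      (hiter_isBelief hP hμ (k+1) is rs b₁ hb₁)
    linarith
  -- main case
  set lam : ℝ := ε / (1 - ε) with hlamdef
  have hlam0 : 0 < lam := div_pos hε0 (by linarith)
  have hlam1 : lam ≤ 1 := by rw [hlamdef, div_le_one (by linarith)]; linarith
  set rP : ℝ := dP / ε with hrPdef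
  set rμ : ℝ := dμ / min μmin (1 - μmax) with hrμdef
  have hrP0 : 0 ≤ rP := div_nonneg hdP0 hε0.le
  have hrμ0 : 0 ≤ rμ := div_nonneg hdμ0 hc₀.le
  have hs0 : 0 ≤ rP + rμ := by linarith
  have hcase2 : T * (rP + rμ) < 2 := lt_of_le_of_lt hRHSineq hcase
  have hTlam : 8 ≤ T * lam := by
    have h1 : T * lam = 4 * M * ((1 - ε) / ε) := by
      rw [hTdef, hlamdef, div_pow]
      field_simp
    have h2 : (2:ℝ) * 1 ≤ (M:ℝ) * ((1 - ε) / ε) :=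
      mul_le_mul hM2 hA1 zero_le_one (by linarith)
    rw [h1]; linarith
  have h2s : 2 * (rP + rμ) < lam := by
    by_contra hcon
    push_neg at hcon
    have h2 : T * (lam - 2 * (rP + rμ)) ≤ 0 :=
      mul_nonpos_of_nonneg_of_nonpos hTpos.le (by linarith)
    have h3 : T * (lam - 2 * (rP + rμ)) = T * lam - 2 * (T * (rP + rμ)) := by ring
    linarith
  have hrP1 : rP < 1 := by linarith
  have hrμ1 : rμ < 1 := by linarith
  have haP : 0 < 1 - rP := by linarith
  have haw : 0 < 1 - rμ := by linarith
  have hbP : 0 < 1 + rP := by linarith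
  have hbw : 0 < 1 + rμ := by linarith
  -- pointwise sandwiches
  have hPc : ∀ m m', (1 - rP) * P m m' ≤ Phat m m' ∧ Phat m m' ≤ (1 + rP) * P m m' := by
    intro m m'
    have habs := abs_le.1 (hΔP m m')
    have hkey : dP ≤ rP * P m m' := by
      have h1 : rP * ε ≤ rP * P m m' := mul_le_mul_of_nonneg_left (hPlb m m') hrP0
      have h2 : rP * ε = dP := by
        rw [hrPdef]; exact div_mul_cancel₀ _ hε0.ne'
      linarith
    have e1 : (1 - rP) * P m m' = P m m' - rP * P m m' := by ring
    have e2 : (1 + rP) * P m m' = P m m' + rP * P m m' := by ring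
    constructor
    · linarith [habs.1]
    · linarith [habs.2]
  have hwc : ∀ (i : Fin I) (r : Bool) m,
      (1 - rμ) * bern (μ m i) r ≤ bern (μhat m i) r ∧
        bern (μhat m i) r ≤ (1 + rμ) * bern (μ m i) r := by
    intro i r m
    have habs := abs_le.1 (hΔw m i r)
    have hkey : dμ ≤ rμ * bern (μ m i) r := by
      have h1 : rμ * min μmin (1 - μmax) ≤ rμ * bern (μ m i) r :=
        mul_le_mul_of_nonneg_left (hwlb m i r) hrμ0
      have h2 : rμ * min μmin (1 - μmax) = dμ := by
        rw [hrμdef]; exact div_mul_cancel₀ _ hc₀.ne'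
      linarith
    have e1 : (1 - rμ) * bern (μ m i) r = bern (μ m i) r - rμ * bern (μ m i) r := by ring
    have e2 : (1 + rμ) * bern (μ m i) r = bern (μ m i) r + rμ * bern (μ m i) r := by ring
    constructor
    · linarith [habs.1]
    · linarith [habs.2]
  have hPhatpos : ∀ m m', 0 < Phat m m' :=
    fun m m' => lt_of_lt_of_le (mul_pos haP (hPpos m m')) (hPc m m').1
  -- ratio constants
  set R₀ : ℝ := (1 + rP) * (1 + rμ) / ((1 - rP) * (1 - rμ)) with hR₀def
  have haa : 0 < (1 - rP) * (1 - rμ) := mul_pos haP haw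
  have hbb1 : (1:ℝ) ≤ (1 + rP) * (1 + rμ) := by
    have hprod : 0 ≤ rP * rμ := mul_nonneg hrP0 hrμ0
    have e : (1 + rP) * (1 + rμ) = 1 + rP + rμ + rP * rμ := by ring
    linarith
  have hbb0 : (0:ℝ) < (1 + rP) * (1 + rμ) := by linarith
  have haaR : R₀ * ((1 - rP) * (1 - rμ)) = (1 + rP) * (1 + rμ) := by
    rw [hR₀def]
    exact div_mul_cancel₀ _ haa.ne'
  have hden : 0 < (1 - rP) * (1 - rμ) - (1 - lam) * ((1 + rP) * (1 + rμ)) := by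
    have hid : (1 - rP) * (1 - rμ) - (1 - lam) * ((1 + rP) * (1 + rμ))
        = lam * ((1 + rP) * (1 + rμ)) - 2 * (rP + rμ) := by ring
    have h1 : lam * 1 ≤ lam * ((1 + rP) * (1 + rμ)) :=
      mul_le_mul_of_nonneg_left hbb1 hlam0.le
    rw [hid]; linarith
  have h1Rg : 0 < 1 - R₀ * (1 - lam) := by
    have h1 : (1 - R₀ * (1 - lam)) * ((1 - rP) * (1 - rμ))
        = (1 - rP) * (1 - rμ) - (1 - lam) * ((1 + rP) * (1 + rμ)) := by
      rw [show (1 - R₀ * (1 - lam)) * ((1 - rP) * (1 - rμ))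
        = (1 - rP) * (1 - rμ) - (1 - lam) * (R₀ * ((1 - rP) * (1 - rμ))) from by ring, haaR]
    by_contra hcon
    push_neg at hcon
    have h2 : (1 - R₀ * (1 - lam)) * ((1 - rP) * (1 - rμ)) ≤ 0 :=
      mul_nonpos_of_nonpos_of_nonneg hcon haa.le
    linarith
  have hR₀1 : 1 ≤ R₀ := by
    rw [hR₀def, le_div_iff₀ haa]
    have e : (1 + rP) * (1 + rμ) - 1 * ((1 - rP) * (1 - rμ)) = 2 * (rP + rμ) := by ring
    linarith
  set Xs : ℝ := R₀ * lam / (1 - R₀ * (1 - lam)) with hXsdef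
  have hXsR₀ : R₀ ≤ Xs := by
    rw [hXsdef, le_div_iff₀ h1Rg]
    have hint : 0 ≤ (1 - lam) * (R₀ - 1) * R₀ :=
      mul_nonneg (mul_nonneg (by linarith) (by linarith)) (by linarith)
    have e : R₀ * lam - R₀ * (1 - R₀ * (1 - lam)) = (1 - lam) * (R₀ - 1) * R₀ := by ring
    linarith
  have hXs1 : 1 ≤ Xs := le_trans hR₀1 hXsR₀
  have hfix : R₀ * (1 + (1 - lam) * (Xs - 1)) = Xs := by
    have e1 : Xs * (1 - R₀ * (1 - lam)) = R₀ * lam := by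
      rw [hXsdef]; exact div_mul_cancel₀ _ h1Rg.ne'
    linarith [e1]
  -- the key quantitative bound
  have hXsbound : Xs - 1 ≤ T * (rP + rμ) := by
    have hXsle : Xs ≤ 1 + T * (rP + rμ) := by
      rw [hXsdef, div_le_iff₀ h1Rg]
      apply le_of_mul_le_mul_right _ haa
      have e1 : T * lam * ((1 + rP) * (1 + rμ)) ≥ 8 := by
        have h1 : T * lam * 1 ≤ T * lam * ((1 + rP) * (1 + rμ)) :=
          mul_le_mul_of_nonneg_left hbb1 (by linarith)
        linarith
      have e3 : 0 ≤ (rP + rμ) * (T * lam * ((1 + rP) * (1 + rμ)) - 2 - 2 * (T * (rP + rμ))) :=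
        mul_nonneg hs0 (by linarith)
      have hpoly : lam * ((1 + rP) * (1 + rμ))
          ≤ (1 + T * (rP + rμ)) *
            ((1 - rP) * (1 - rμ) - (1 - lam) * ((1 + rP) * (1 + rμ))) := by
        have hid : (1 + T * (rP + rμ)) *
              ((1 - rP) * (1 - rμ) - (1 - lam) * ((1 + rP) * (1 + rμ)))
            - lam * ((1 + rP) * (1 + rμ))
            = (rP + rμ) * (T * lam * ((1 + rP) * (1 + rμ)) - 2 - 2 * (T * (rP + rμ))) := by
          ring
        linarith
      calc R₀ * lam * ((1 - rP) * (1 - rμ))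
          = lam * (R₀ * ((1 - rP) * (1 - rμ))) := by ring
        _ = lam * ((1 + rP) * (1 + rμ)) := by rw [haaR]
        _ ≤ (1 + T * (rP + rμ)) *
              ((1 - rP) * (1 - rμ) - (1 - lam) * ((1 + rP) * (1 + rμ))) := hpoly
        _ = (1 + T * (rP + rμ)) * (1 - R₀ * (1 - lam)) * ((1 - rP) * (1 - rμ)) := by
            rw [show (1 + T * (rP + rμ)) * (1 - R₀ * (1 - lam)) * ((1 - rP) * (1 - rμ))
              = (1 + T * (rP + rμ)) *
                (((1 - rP) * (1 - rμ)) - (1 - lam) * (R₀ * ((1 - rP) * (1 - rμ)))) from by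
                ring, haaR]
    linarith
  -- the one-step lemma
  have step : ∀ (i : Fin I) (r : Bool) (p q : Fin M → ℝ), IsBelief p → IsBelief q →
      (∀ m, 0 < q m) → RatLe p q Xs →
      RatLe (Hupd Phat μhat p i r) (Hupd P μ q i r) Xs := by
    intro i r p q hp hq hq0 hR
    have hparam : RatLe (Hupd Phat μhat p i r) (Hupd P μ p i r) R₀ := by
      rw [hR₀def]
      exact ratLe_hupd_param hp.1 haP haw hbP hbw hP.1 hPc
        (fun m => (bern_bounds (hμ m i) r).1.le) (hwc i r)
        (denom_pos hμ hp i r) (denom_pos hμhat hp i r)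
    have hcontr : RatLe (Hupd P μ p i r) (Hupd P μ q i r)
        (1 + (1 - ε / (1 - ε)) * (Xs - 1)) := by
      obtain ⟨α, β, hα, hβ, hβX, hsw⟩ := hR
      have hsand : ∀ k : Fin M, α * (bern (μ k i) r * q k) ≤ bern (μ k i) r * p k ∧
          bern (μ k i) r * p k ≤ β * (bern (μ k i) r * q k) := by
        intro k
        have hw := (bern_bounds (hμ k i) r).1.le
        constructor
        · calc α * (bern (μ k i) r * q k) = bern (μ k i) r * (α * q k) := by ring
            _ ≤ bern (μ k i) r * p k := mul_le_mul_of_nonneg_left (hsw k).1 hw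
        · calc bern (μ k i) r * p k ≤ bern (μ k i) r * (β * q k) :=
              mul_le_mul_of_nonneg_left (hsw k).2 hw
            _ = β * (bern (μ k i) r * q k) := by ring
      have hnum := ratLe_contraction hM hε0 hεhalf hKb
        (u := fun k => bern (μ k i) r * p k) (v := fun k => bern (μ k i) r * q k)
        (fun m => mul_pos (bern_bounds (hμ m i) r).1 (hq0 m)) hα hβX hXs1 hsand
      exact hnum.div_div (denom_pos hμ hp i r) (denom_pos hμ hq i r)
    have hcomb := hparam.trans hcontr
    rw [← hlamdef] at hcomb
    rw [hfix] at hcomb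
    exact hcomb
  -- the main induction
  have main : ∀ (n : ℕ) (is : Fin n → Fin I) (rs : Fin n → Bool) (p q : Fin M → ℝ),
      IsBelief p → IsBelief q → (∀ m, 0 < q m) → RatLe p q Xs →
      RatLe (Hiter Phat μhat n p is rs) (Hiter P μ n q is rs) Xs := by
    intro n
    induction n with
    | zero => intro _ _ p q _ _ _ h; simpa [Hiter] using h
    | succ j ih =>
      intro is rs p q hp hq hq0 hR
      rw [show Hiter Phat μhat (j+1) p is rs
          = Hiter Phat μhat j (Hupd Phat μhat p (is 0) (rs 0)) (fun t => is t.succ)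
            (fun t => rs t.succ) from rfl,
        show Hiter P μ (j+1) q is rs
          = Hiter P μ j (Hupd P μ q (is 0) (rs 0)) (fun t => is t.succ)
            (fun t => rs t.succ) from rfl]
      exact ih _ _ _ _ (hupd_isBelief hPhat hμhat hp _ _) (hupd_isBelief hP hμ hq _ _)
        (hupd_pos hPpos hμ hq _ _) (step _ _ _ _ hp hq hq0 hR)
  -- assemble
  have hbase : RatLe (Hupd Phat μhat b₁ (is 0) (rs 0)) (Hupd P μ b₁ (is 0) (rs 0)) R₀ := by
    rw [hR₀def]
    exact ratLe_hupd_param hb₁.1 haP haw hbP hbw hP.1 hPc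
      (fun m => (bern_bounds (hμ m (is 0)) (rs 0)).1.le) (hwc (is 0) (rs 0))
      (denom_pos hμ hb₁ (is 0) (rs 0)) (denom_pos hμhat hb₁ (is 0) (rs 0))
  have hrat := main k (fun t => is t.succ) (fun t => rs t.succ) _ _
    (hupd_isBelief hPhat hμhat hb₁ (is 0) (rs 0))
    (hupd_isBelief hP hμ hb₁ (is 0) (rs 0)) (hupd_pos hPpos hμ hb₁ (is 0) (rs 0))
    (hbase.mono hXsR₀)
  have hl1 : l1 (Hiter Phat μhat (k+1) b₁ is rs) (Hiter P μ (k+1) b₁ is rs) ≤ Xs - 1 := by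
    rw [show Hiter Phat μhat (k+1) b₁ is rs
        = Hiter Phat μhat k (Hupd Phat μhat b₁ (is 0) (rs 0)) (fun t => is t.succ)
          (fun t => rs t.succ) from rfl,
      show Hiter P μ (k+1) b₁ is rs
        = Hiter P μ k (Hupd P μ b₁ (is 0) (rs 0)) (fun t => is t.succ)
          (fun t => rs t.succ) from rfl]
    exact ratLe_l1
      (hiter_isBelief hPhat hμhat k _ _ _ (hupd_isBelief hPhat hμhat hb₁ (is 0) (rs 0)))
      (hiter_isBelief hP hμ k _ _ _ (hupd_isBelief hP hμ hb₁ (is 0) (rs 0)))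
      hXs1 hrat
  linarith [hXsbound, hRHSineq]
end

section
/- Suppose 0 < ε ≤ 1/2, so that α = (1−2ε)/(1−ε) ∈ [0,1). Set C₄ = 2/(1−α) = 2(1−ε)/ε and C₅ = (1+α)/2. Then for every n ≥ 1, every action sequence i_{1:n} ∈ {1,…,I}^n, every pair of beliefs b¹, b² ∈ B, and every function f : B → ℝ satisfying |f(b) − f(b′)| ≤ ‖b − b′‖₁ for all b, b′ ∈ B and sup_{b∈B} |f(b)| ≤ 1, one has | Σ_{r_{1:n} ∈ {0,1}^n} f(H^{(n)}(b¹, i_{1:n}, r_{1:n}))·Q^{(n)}(r_{1:n}|b¹, i_{1:n}) − Σ_{r_{1:n} ∈ {0,1}^n} f(H^{(n)}(b², i_{1:n}, r_{1:n}))·Q^{(n)}(r_{1:n}|b², i_{1:n}) | ≤ (C₄·α^n + C₅)·‖b¹ − b²‖₁. In particular, the n-step belief transition kernel is Lipschitz in the initial belief, uniformly over action sequences, with Lipschitz module at most C₄α^n + C₅. -/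
open Finset

/-!
Split the difference as `∑ (f(H b₁) - f(H b₂)) Q_{b₁} + ∑ₘ (b₁ - b₂)(m) g(m)`, where `g(m)` is
the expectation of `f ∘ H⁽ⁿ⁾(b₂, ·)` when the hidden chain starts in state `m`.

For the first sum: `H⁽ⁿ⁾(b, r)` is the posterior of the initial state given all of `r`, pushed
successively through the Doob `h`-transforms of `P` by the likelihoods of the remaining rewards
and finally through `P` itself. As `ε ≤ P ≤ 1 - ε` (the upper bound because `M ≥ 2`), each of
these kernels dominates `ε / (1 - ε)` times a probability vector, so by Dobrushin's argument it
contracts `ℓ¹` by `α = 1 - ε / (1 - ε)`. The posteriors themselves satisfy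
`Q_{b₁}(r) ‖post(b₁, r) - post(b₂, r)‖₁ ≤ 2 ∑ₘ L(r | m) |b₁(m) - b₂(m)|`, which sums over `r` to
`2 ‖b₁ - b₂‖₁`.

For the second sum, `∑ (b₁ - b₂) = 0`, so only the oscillation of `g` matters. Conditioning on
the first reward bounds it by `2α` (one step of `P` applied to a function bounded by `1`) plus
`2αⁿ⁻¹` (filter stability for the remaining rewards).
-/

open Matrix

noncomputable def reweight {M : ℕ} (b w : Fin M → ℝ) : Fin M → ℝ :=
  fun m => b m * w m / ∑ k, b k * w k

noncomputable def hTransform {M : ℕ} (P : Matrix (Fin M) (Fin M) ℝ) (w : Fin M → ℝ) :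
    Matrix (Fin M) (Fin M) ℝ :=
  fun m m' => P m m' * w m' / (P *ᵥ w) m

def HTransformContracts {M : ℕ} (P : Matrix (Fin M) (Fin M) ℝ) (α : ℝ) : Prop :=
  ∀ w : Fin M → ℝ, (∀ m, 0 < w m) → ∀ p q : Fin M → ℝ, ∑ m, p m = ∑ m, q m →
    l1 (p ᵥ* hTransform P w) (q ᵥ* hTransform P w) ≤ α * l1 p q

lemma abs_sum_mul_le_of_sum_eq_zero {ι : Type*} [Fintype ι] {d g : ι → ℝ}
    (hd : ∑ m, d m = 0) {K : ℝ} (hg : ∀ m m', |g m - g m'| ≤ K) :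
    |∑ m, d m * g m| ≤ K / 2 * ∑ m, |d m| := by
  rcases isEmpty_or_nonempty ι with hι | hι
  · simp
  obtain ⟨m₁, hm₁⟩ := Finite.exists_max g
  obtain ⟨m₂, hm₂⟩ := Finite.exists_min g
  -- centring `g` at the midpoint of its range costs nothing since `∑ d = 0`
  have hcentre : ∑ m, d m * g m = ∑ m, d m * (g m - (g m₁ + g m₂) / 2) := by
    simp only [mul_sub, Finset.sum_sub_distrib, ← Finset.sum_mul, hd, zero_mul, sub_zero]
  rw [hcentre, Finset.mul_sum]
  refine (Finset.abs_sum_le_sum_abs _ _).trans (Finset.sum_le_sum fun m _ => ?_)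
  have := (le_abs_self _).trans (hg m₁ m₂)
  rw [abs_mul, mul_comm]
  exact mul_le_mul_of_nonneg_right
    (abs_le.2 ⟨by linarith [hm₂ m], by linarith [hm₁ m]⟩) (abs_nonneg _)

lemma abs_sum_bern_mul_sub_le {ι : Type*} {p : ι → ℝ} (hp : ∀ m, p m ∈ Set.Icc 0 1)
    {u : Bool → ι → ℝ} {A D : ℝ} (hA : ∀ r m m', |u r m - u r m'| ≤ A)
    (hD : ∀ m, |u true m - u false m| ≤ D) (m m' : ι) :
    |∑ r, bern (p m) r * u r m - ∑ r, bern (p m') r * u r m'| ≤ A + D := by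
  obtain ⟨hp0, hp1⟩ := hp m
  obtain ⟨hq0, hq1⟩ := hp m'
  have hsplit : ∑ r, bern (p m) r * u r m - ∑ r, bern (p m') r * u r m' =
      p m * (u true m - u true m') + (1 - p m) * (u false m - u false m') +
        (p m - p m') * (u true m' - u false m') := by
    simp only [Fintype.sum_bool, bern, if_true, Bool.false_eq_true, if_false]
    ring
  rw [hsplit]
  refine (abs_add_le _ _).trans ((add_le_add (abs_add_le _ _) le_rfl).trans ?_)
  rw [abs_mul, abs_mul, abs_mul, abs_of_nonneg hp0, abs_of_nonneg (sub_nonneg.2 hp1)]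
  have h₁ := mul_le_mul_of_nonneg_left (hA true m m') hp0
  have h₂ := mul_le_mul_of_nonneg_left (hA false m m') (sub_nonneg.2 hp1)
  have h₃ := mul_le_mul (abs_le.2 ⟨by linarith, by linarith⟩ : |p m - p m'| ≤ 1) (hD m')
    (abs_nonneg _) zero_le_one
  linarith

section Simplex

variable {M : ℕ}

lemma IsBelief.sum_mul_pos {b w : Fin M → ℝ} (hb : IsBelief b) (hw : ∀ m, 0 < w m) :
    0 < ∑ m, b m * w m := by
  obtain ⟨m, hm⟩ : ∃ m, 0 < b m := by
    by_contra! h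
    linarith [hb.2, Finset.sum_nonpos fun m (_ : m ∈ Finset.univ) => h m]
  exact Finset.sum_pos' (fun k _ => mul_nonneg (hb.1 k) (hw k).le)
    ⟨m, Finset.mem_univ m, mul_pos hm (hw m)⟩

lemma IsBelief.reweight {b w : Fin M → ℝ} (hb : IsBelief b) (hw : ∀ m, 0 < w m) :
    IsBelief (reweight b w) :=
  ⟨fun m => div_nonneg (mul_nonneg (hb.1 m) (hw m).le) (hb.sum_mul_pos hw).le,
    by simp only [_root_.reweight, ← Finset.sum_div, div_self (hb.sum_mul_pos hw).ne']⟩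

lemma IsBelief.vecMul {b : Fin M → ℝ} {P : Matrix (Fin M) (Fin M) ℝ} (hb : IsBelief b)
    (hP : RowStochastic P) : IsBelief (b ᵥ* P) := by
  simp only [IsBelief, vecMul_apply_eq_sum]
  refine ⟨fun m => Finset.sum_nonneg fun k _ => mul_nonneg (hb.1 k) (hP.1 k m), ?_⟩
  rw [Finset.sum_comm]
  simp [← Finset.mul_sum, hP.2, hb.2]

lemma l1_le_two_s2 {b b' : Fin M → ℝ} (hb : IsBelief b) (hb' : IsBelief b') : l1 b b' ≤ 2 :=
  calc l1 b b' ≤ ∑ m, (b m + b' m) := Finset.sum_le_sum fun m _ => (abs_sub _ _).trans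
        (by rw [abs_of_nonneg (hb.1 m), abs_of_nonneg (hb'.1 m)])
    _ = 2 := by rw [Finset.sum_add_distrib, hb.2, hb'.2]; norm_num

lemma abs_sum_mul_sub_le_l1 (p q h : Fin M → ℝ) (hh : ∀ m, |h m| ≤ 1) :
    |∑ m, p m * h m - ∑ m, q m * h m| ≤ l1 p q := by
  rw [← Finset.sum_sub_distrib]
  refine (Finset.abs_sum_le_sum_abs _ _).trans (Finset.sum_le_sum fun m _ => ?_)
  rw [← sub_mul, abs_mul]
  exact mul_le_of_le_one_right (abs_nonneg _) (hh m)

lemma mul_l1_reweight_le {b₁ b₂ w : Fin M → ℝ} (hb₂ : ∀ m, 0 ≤ b₂ m) (hw : ∀ m, 0 ≤ w m)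
    (h₁ : 0 < ∑ m, b₁ m * w m) (h₂ : 0 < ∑ m, b₂ m * w m) :
    (∑ m, b₁ m * w m) * l1 (reweight b₁ w) (reweight b₂ w) ≤ 2 * ∑ m, w m * |b₁ m - b₂ m| := by
  set S₁ := ∑ m, b₁ m * w m
  set S₂ := ∑ m, b₂ m * w m
  have hS : |S₂ - S₁| ≤ ∑ m, w m * |b₁ m - b₂ m| := by
    rw [← Finset.sum_sub_distrib]
    refine (Finset.abs_sum_le_sum_abs _ _).trans (Finset.sum_le_sum fun m _ => ?_)
    rw [← sub_mul, abs_mul, abs_of_nonneg (hw m), abs_sub_comm, mul_comm]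
  have hterm : ∀ m, S₁ * |reweight b₁ w m - reweight b₂ w m| ≤
      w m * |b₁ m - b₂ m| + b₂ m * w m / S₂ * |S₂ - S₁| := by
    intro m
    have : S₁ * (reweight b₁ w m - reweight b₂ w m) =
        w m * (b₁ m - b₂ m) + b₂ m * w m / S₂ * (S₂ - S₁) := by
      change S₁ * (b₁ m * w m / S₁ - b₂ m * w m / S₂) = _
      field_simp
      ring
    calc S₁ * |reweight b₁ w m - reweight b₂ w m|
        = |w m * (b₁ m - b₂ m) + b₂ m * w m / S₂ * (S₂ - S₁)| := by
          rw [← this, abs_mul, abs_of_pos h₁]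
      _ ≤ _ := (abs_add_le _ _).trans_eq (by
          rw [abs_mul, abs_mul, abs_of_nonneg (hw m),
            abs_of_nonneg (div_nonneg (mul_nonneg (hb₂ m) (hw m)) h₂.le)])
  calc S₁ * l1 (reweight b₁ w) (reweight b₂ w)
      ≤ ∑ m, (w m * |b₁ m - b₂ m| + b₂ m * w m / S₂ * |S₂ - S₁|) := by
        rw [l1, Finset.mul_sum]
        exact Finset.sum_le_sum fun m _ => hterm m
    _ = ∑ m, w m * |b₁ m - b₂ m| + |S₂ - S₁| := by
        rw [Finset.sum_add_distrib, ← Finset.sum_mul, ← Finset.sum_div, div_self h₂.ne', one_mul]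
    _ ≤ 2 * ∑ m, w m * |b₁ m - b₂ m| := by linarith

lemma reweight_reweight {b v w : Fin M → ℝ} (hv : ∑ m, b m * v m ≠ 0) :
    reweight (reweight b v) w = reweight b (fun m => v m * w m) := by
  ext m
  simp only [reweight, div_mul_eq_mul_div, ← Finset.sum_div, div_div_div_cancel_right₀ hv,
    mul_assoc]

end Simplex

section Contraction

variable {M : ℕ} {P : Matrix (Fin M) (Fin M) ℝ}

lemma l1_vecMul_le_of_minorant {K : Matrix (Fin M) (Fin M) ℝ} {γ : Fin M → ℝ}
    (hγ : ∀ m m', γ m' ≤ K m m') (hK : ∀ m, ∑ m', K m m' = 1) {p q : Fin M → ℝ}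
    (hpq : ∑ m, p m = ∑ m, q m) :
    l1 (p ᵥ* K) (q ᵥ* K) ≤ (1 - ∑ m', γ m') * l1 p q := by
  -- subtracting `γ` from every row changes nothing since `p - q` has total mass zero
  have hshift : ∀ m', (p ᵥ* K) m' - (q ᵥ* K) m' = ∑ m, (p m - q m) * (K m m' - γ m') := by
    intro m'
    simp only [vecMul_apply_eq_sum, mul_sub, sub_mul, Finset.sum_sub_distrib, ← Finset.sum_mul,
      hpq, sub_self, sub_zero]
  calc l1 (p ᵥ* K) (q ᵥ* K) ≤ ∑ m', ∑ m, |p m - q m| * (K m m' - γ m') := by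
        refine Finset.sum_le_sum fun m' _ => ?_
        rw [hshift]
        refine (Finset.abs_sum_le_sum_abs _ _).trans_eq (Finset.sum_congr rfl fun m _ => ?_)
        rw [abs_mul, abs_of_nonneg (sub_nonneg.2 (hγ m m'))]
    _ = (1 - ∑ m', γ m') * l1 p q := by
        rw [Finset.sum_comm, l1, Finset.mul_sum]
        refine Finset.sum_congr rfl fun m _ => ?_
        rw [← Finset.mul_sum, Finset.sum_sub_distrib, hK, mul_comm]

lemma RowStochastic.mulVec_pos (hP : RowStochastic P) {w : Fin M → ℝ} (hw : ∀ m, 0 < w m)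
    (m : Fin M) : 0 < (P *ᵥ w) m :=
  IsBelief.sum_mul_pos ⟨hP.1 m, hP.2 m⟩ hw

lemma RowStochastic.abs_mulVec_le (hP : RowStochastic P) {h : Fin M → ℝ} {c : ℝ}
    (hh : ∀ m, |h m| ≤ c) (m : Fin M) : |(P *ᵥ h) m| ≤ c :=
  calc |(P *ᵥ h) m| ≤ ∑ k, P m k * c := by
        rw [mulVec_apply_eq_sum]
        refine (Finset.abs_sum_le_sum_abs _ _).trans (Finset.sum_le_sum fun k _ => ?_)
        rw [abs_mul, abs_of_nonneg (hP.1 m k)]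
        exact mul_le_mul_of_nonneg_left (hh k) (hP.1 m k)
    _ = c := by rw [← Finset.sum_mul, hP.2 m, one_mul]

lemma RowStochastic.le_one_sub (hP : RowStochastic P) (hM : 2 ≤ M) {ε : ℝ}
    (hε : ∀ m m', ε ≤ P m m') (m m' : Fin M) : P m m' ≤ 1 - ε := by
  have : Nontrivial (Fin M) := Fin.nontrivial_iff_two_le.2 hM
  obtain ⟨m'', hne⟩ := exists_ne m'
  have hpair : P m m' + P m m'' ≤ 1 := by
    rw [← hP.2 m, ← Finset.sum_pair hne.symm]
    exact Finset.sum_le_sum_of_subset_of_nonneg (Finset.subset_univ _) fun k _ _ => hP.1 m k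
  linarith [hε m m'']

lemma RowStochastic.sum_hTransform (hP : RowStochastic P) {w : Fin M → ℝ}
    (hw : ∀ m, 0 < w m) (m : Fin M) : ∑ m', hTransform P w m m' = 1 := by
  simp only [hTransform, ← Finset.sum_div]
  exact div_self (hP.mulVec_pos hw m).ne'

lemma hTransform_one (hP : RowStochastic P) : hTransform P (fun _ => 1) = P := by
  ext m m'
  simp [hTransform, mulVec_apply_eq_sum, hP.2 m]

lemma reweight_vecMul {w : Fin M → ℝ} (hW : ∀ m, (P *ᵥ w) m ≠ 0) (p : Fin M → ℝ) :
    reweight (p ᵥ* P) w = reweight p (P *ᵥ w) ᵥ* hTransform P w := by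
  have hden : ∑ k, (p ᵥ* P) k * w k = ∑ m, p m * (P *ᵥ w) m := by
    simp only [vecMul_apply_eq_sum, mulVec_apply_eq_sum, Finset.sum_mul, Finset.mul_sum]
    rw [Finset.sum_comm]
    exact Finset.sum_congr rfl fun _ _ => Finset.sum_congr rfl fun _ _ => by ring
  ext m'
  simp only [reweight]
  rw [hden]
  simp only [reweight, hTransform, vecMul_apply_eq_sum, Finset.sum_mul, Finset.sum_div]
  exact Finset.sum_congr rfl fun m _ => by field_simp [hW m]

lemma hTransformContracts_of_mem_Icc (hP : RowStochastic P) {ε : ℝ} (hε : 0 ≤ ε)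
    (hPε : ∀ m m', P m m' ∈ Set.Icc ε (1 - ε)) :
    HTransformContracts P ((1 - 2 * ε) / (1 - ε)) := by
  intro w hw p q hpq
  rcases isEmpty_or_nonempty (Fin M) with hM | hM
  · simp [l1]
  obtain ⟨m₀⟩ := hM
  have hε1 : 0 < 1 - ε := by linarith [(hPε m₀ m₀).1, (hPε m₀ m₀).2]
  have hS : 0 < ∑ k, w k := Finset.sum_pos (fun k _ => hw k) ⟨m₀, Finset.mem_univ _⟩
  have hγ : ∀ m m', ε * w m' / ((1 - ε) * ∑ k, w k) ≤ hTransform P w m m' := by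
    intro m m'
    have hW : (P *ᵥ w) m ≤ (1 - ε) * ∑ k, w k := by
      rw [mulVec_apply_eq_sum, Finset.mul_sum]
      exact Finset.sum_le_sum fun k _ => mul_le_mul_of_nonneg_right (hPε m k).2 (hw k).le
    calc ε * w m' / ((1 - ε) * ∑ k, w k) ≤ ε * w m' / (P *ᵥ w) m :=
          div_le_div_of_nonneg_left (mul_nonneg hε (hw m').le) (hP.mulVec_pos hw m) hW
      _ ≤ hTransform P w m m' :=
          div_le_div_of_nonneg_right (mul_le_mul_of_nonneg_right (hPε m m').1 (hw m').le)
            (hP.mulVec_pos hw m).le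
  have hsum : 1 - ∑ m', ε * w m' / ((1 - ε) * ∑ k, w k) = (1 - 2 * ε) / (1 - ε) := by
    rw [← Finset.sum_div, ← Finset.mul_sum]
    field_simp
    ring
  exact hsum ▸ l1_vecMul_le_of_minorant hγ (hP.sum_hTransform hw) hpq

lemma HTransformContracts.l1_vecMul_le {α : ℝ} (hα : HTransformContracts P α)
    (hP : RowStochastic P) {p q : Fin M → ℝ} (hpq : ∑ m, p m = ∑ m, q m) :
    l1 (p ᵥ* P) (q ᵥ* P) ≤ α * l1 p q := by
  simpa only [hTransform_one hP] using hα _ (fun _ => one_pos) p q hpq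

lemma HTransformContracts.abs_mulVec_sub_le {α : ℝ} (hα : HTransformContracts P α)
    (hα0 : 0 ≤ α) (hP : RowStochastic P) {h : Fin M → ℝ} (hh : ∀ m, |h m| ≤ 1)
    (m m' : Fin M) : |(P *ᵥ h) m - (P *ᵥ h) m'| ≤ 2 * α := by
  have hsingle : ∀ k : Fin M, IsBelief (Pi.single k 1) := fun k =>
    ⟨fun j => by by_cases hj : j = k <;> simp [hj], by simp⟩
  calc |(P *ᵥ h) m - (P *ᵥ h) m'| ≤ l1 (Pi.single m 1 ᵥ* P) (Pi.single m' 1 ᵥ* P) := by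
        rw [single_one_vecMul, single_one_vecMul]
        exact abs_sum_mul_sub_le_l1 (P m) (P m') h hh
    _ ≤ α * l1 (Pi.single m 1) (Pi.single m' 1) :=
        hα.l1_vecMul_le hP ((hsingle m).2.trans (hsingle m').2.symm)
    _ ≤ 2 * α := by
        rw [mul_comm]
        exact mul_le_mul_of_nonneg_right (l1_le_two_s2 (hsingle m) (hsingle m')) hα0

end Contraction

lemma bern_pos {p : ℝ} (hp : p ∈ Set.Ioo 0 1) (r : Bool) : 0 < bern p r := by
  cases r <;> simp [bern, hp.1, hp.2]

lemma sum_bern (p : ℝ) : ∑ r, bern p r = 1 := by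
  simp [bern]

lemma sum_pi_fin_succ {α β : Type*} [Fintype α] [AddCommMonoid β] {n : ℕ}
    (F : (Fin (n + 1) → α) → β) : ∑ rs, F rs = ∑ r, ∑ rs', F (Fin.cons r rs') := by
  rw [← (Fin.consEquiv fun _ => α).sum_comp, Fintype.sum_prod_type]
  rfl

noncomputable def posterior {M I : ℕ} (P : Matrix (Fin M) (Fin M) ℝ) (μ : Fin M → Fin I → ℝ)
    (n : ℕ) (b : Fin M → ℝ) (is : Fin (n + 1) → Fin I) (rs : Fin (n + 1) → Bool) :
    Fin M → ℝ :=
  reweight b fun m => law P μ n m is rs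

noncomputable def expectLaw {M I : ℕ} (P : Matrix (Fin M) (Fin M) ℝ) (μ : Fin M → Fin I → ℝ)
    (n : ℕ) (is : Fin (n + 1) → Fin I) (φ : (Fin (n + 1) → Bool) → ℝ) (m : Fin M) : ℝ :=
  ∑ rs, φ rs * law P μ n m is rs

section HMM

variable {M I : ℕ} {P : Matrix (Fin M) (Fin M) ℝ} {μ : Fin M → Fin I → ℝ}

lemma Hupd_eq_reweight_vecMul (b : Fin M → ℝ) (i : Fin I) (r : Bool) :
    Hupd P μ b i r = reweight b (fun m => bern (μ m i) r) ᵥ* P := by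
  ext m
  simp only [Hupd, reweight, vecMul_apply_eq_sum, Finset.sum_div]
  exact Finset.sum_congr rfl fun k _ => by rw [Finset.sum_congr rfl fun j _ => mul_comm _ _]; ring

lemma Hiter_succ (n : ℕ) (b : Fin M → ℝ) (is : Fin (n + 1) → Fin I) (rs : Fin (n + 1) → Bool) :
    Hiter P μ (n + 1) b is rs =
      Hiter P μ n (Hupd P μ b (is 0) (rs 0)) (Fin.tail is) (Fin.tail rs) :=
  rfl

lemma Hiter_one (b : Fin M → ℝ) (is : Fin 1 → Fin I) (rs : Fin 1 → Bool) :
    Hiter P μ 1 b is rs = posterior P μ 0 b is rs ᵥ* P :=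
  Hupd_eq_reweight_vecMul b (is 0) (rs 0)

lemma law_succ (n : ℕ) (m : Fin M) (is : Fin (n + 2) → Fin I) (rs : Fin (n + 2) → Bool) :
    law P μ (n + 1) m is rs =
      bern (μ m (is 0)) (rs 0) * (P *ᵥ fun m' => law P μ n m' (Fin.tail is) (Fin.tail rs)) m :=
  rfl

lemma IsBelief.Hupd (hP : RowStochastic P) (hμ : ∀ m i, μ m i ∈ Set.Ioo 0 1) {b : Fin M → ℝ}
    (hb : IsBelief b) (i : Fin I) (r : Bool) : IsBelief (Hupd P μ b i r) := by
  rw [Hupd_eq_reweight_vecMul]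
  exact (hb.reweight fun m => bern_pos (hμ m i) r).vecMul hP

lemma IsBelief.Hiter (hP : RowStochastic P) (hμ : ∀ m i, μ m i ∈ Set.Ioo 0 1) :
    ∀ (n : ℕ) {b : Fin M → ℝ}, IsBelief b → ∀ is rs, IsBelief (Hiter P μ n b is rs)
  | 0, _, hb, _, _ => hb
  | n + 1, _, hb, _, _ => IsBelief.Hiter hP hμ n (hb.Hupd hP hμ _ _) _ _

lemma law_pos (hP : RowStochastic P) (hμ : ∀ m i, μ m i ∈ Set.Ioo 0 1) :
    ∀ (n : ℕ) (m : Fin M) is rs, 0 < law P μ n m is rs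
  | 0, m, is, rs => bern_pos (hμ m (is 0)) (rs 0)
  | n + 1, m, is, rs =>
      mul_pos (bern_pos (hμ m (is 0)) (rs 0)) (hP.mulVec_pos (fun _ => law_pos hP hμ n _ _ _) m)

lemma sum_law (hP : RowStochastic P) :
    ∀ (n : ℕ) (m : Fin M) (is : Fin (n + 1) → Fin I), ∑ rs, law P μ n m is rs = 1
  | 0, m, is => by
      rw [sum_pi_fin_succ, ← sum_bern (μ m (is 0))]
      simp [law]
  | n + 1, m, is => by
      rw [sum_pi_fin_succ, ← sum_bern (μ m (is 0))]
      refine Finset.sum_congr rfl fun r _ => ?_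
      simp only [law_succ, Fin.cons_zero, Fin.tail_cons, mulVec_apply_eq_sum, ← Finset.mul_sum]
      rw [Finset.sum_comm]
      simp [← Finset.mul_sum, sum_law hP n, hP.2 m]

lemma Qlaw_pos (hP : RowStochastic P) (hμ : ∀ m i, μ m i ∈ Set.Ioo 0 1) {b : Fin M → ℝ}
    (hb : IsBelief b) (n : ℕ) (is : Fin (n + 1) → Fin I) (rs : Fin (n + 1) → Bool) :
    0 < Qlaw P μ n b is rs :=
  hb.sum_mul_pos fun m => law_pos hP hμ n m is rs

lemma IsBelief.posterior (hP : RowStochastic P) (hμ : ∀ m i, μ m i ∈ Set.Ioo 0 1)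
    {b : Fin M → ℝ} (hb : IsBelief b) (n : ℕ) (is : Fin (n + 1) → Fin I)
    (rs : Fin (n + 1) → Bool) : IsBelief (posterior P μ n b is rs) :=
  hb.reweight fun m => law_pos hP hμ n m is rs

lemma posterior_Hupd (hP : RowStochastic P) (hμ : ∀ m i, μ m i ∈ Set.Ioo 0 1) {b : Fin M → ℝ}
    (hb : IsBelief b) (n : ℕ) (is : Fin (n + 2) → Fin I) (rs : Fin (n + 2) → Bool) :
    posterior P μ n (Hupd P μ b (is 0) (rs 0)) (Fin.tail is) (Fin.tail rs) =
      posterior P μ (n + 1) b is rs ᵥ*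
        hTransform P (fun m => law P μ n m (Fin.tail is) (Fin.tail rs)) := by
  rw [posterior, Hupd_eq_reweight_vecMul,
    reweight_vecMul (fun m => (hP.mulVec_pos (fun _ => law_pos hP hμ n _ _ _) m).ne'),
    reweight_reweight (hb.sum_mul_pos fun m => bern_pos (hμ m (is 0)) (rs 0)).ne']
  rfl

lemma l1_Hiter_le (hP : RowStochastic P) (hμ : ∀ m i, μ m i ∈ Set.Ioo 0 1) {α : ℝ}
    (hα : HTransformContracts P α) (hα0 : 0 ≤ α) (n : ℕ) :
    ∀ (is : Fin (n + 1) → Fin I) (rs : Fin (n + 1) → Bool) {b₁ b₂ : Fin M → ℝ},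
      IsBelief b₁ → IsBelief b₂ →
      l1 (Hiter P μ (n + 1) b₁ is rs) (Hiter P μ (n + 1) b₂ is rs) ≤
        α ^ (n + 1) * l1 (posterior P μ n b₁ is rs) (posterior P μ n b₂ is rs) := by
  induction n with
  | zero =>
    intro is rs b₁ b₂ hb₁ hb₂
    rw [Hiter_one, Hiter_one, pow_one]
    exact hα.l1_vecMul_le hP
      ((hb₁.posterior hP hμ 0 is rs).2.trans (hb₂.posterior hP hμ 0 is rs).2.symm)
  | succ n ih =>
    intro is rs b₁ b₂ hb₁ hb₂
    rw [Hiter_succ, Hiter_succ]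
    refine (ih (Fin.tail is) (Fin.tail rs) (hb₁.Hupd hP hμ _ _) (hb₂.Hupd hP hμ _ _)).trans ?_
    rw [posterior_Hupd hP hμ hb₁, posterior_Hupd hP hμ hb₂, pow_succ α (n + 1), mul_assoc]
    exact mul_le_mul_of_nonneg_left (hα _ (fun m => law_pos hP hμ n m _ _) _ _
      ((hb₁.posterior hP hμ _ is rs).2.trans (hb₂.posterior hP hμ _ is rs).2.symm))
      (pow_nonneg hα0 _)

lemma sum_mul_Qlaw (n : ℕ) (b : Fin M → ℝ) (is : Fin (n + 1) → Fin I)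
    (φ : (Fin (n + 1) → Bool) → ℝ) :
    ∑ rs, φ rs * Qlaw P μ n b is rs = ∑ m, b m * expectLaw P μ n is φ m := by
  simp only [Qlaw, expectLaw, Finset.mul_sum]
  rw [Finset.sum_comm]
  exact Finset.sum_congr rfl fun _ _ => Finset.sum_congr rfl fun _ _ => by ring

lemma abs_expectLaw_sub_le (hP : RowStochastic P) (hμ : ∀ m i, μ m i ∈ Set.Ioo 0 1) {n : ℕ}
    {is : Fin (n + 1) → Fin I} {φ ψ : (Fin (n + 1) → Bool) → ℝ} {c : ℝ}
    (h : ∀ rs, |φ rs - ψ rs| ≤ c) (m : Fin M) :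
    |expectLaw P μ n is φ m - expectLaw P μ n is ψ m| ≤ c :=
  calc |expectLaw P μ n is φ m - expectLaw P μ n is ψ m| ≤ ∑ rs, c * law P μ n m is rs := by
        rw [expectLaw, expectLaw, ← Finset.sum_sub_distrib]
        refine (Finset.abs_sum_le_sum_abs _ _).trans (Finset.sum_le_sum fun rs _ => ?_)
        have hlaw := law_pos hP hμ n m is rs
        rw [← sub_mul, abs_mul, abs_of_pos hlaw]
        exact mul_le_mul_of_nonneg_right (h rs) hlaw.le
    _ = c := by rw [← Finset.mul_sum, sum_law hP, mul_one]

lemma abs_expectLaw_le (hP : RowStochastic P) (hμ : ∀ m i, μ m i ∈ Set.Ioo 0 1) {n : ℕ}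
    {is : Fin (n + 1) → Fin I} {φ : (Fin (n + 1) → Bool) → ℝ} {c : ℝ} (h : ∀ rs, |φ rs| ≤ c)
    (m : Fin M) : |expectLaw P μ n is φ m| ≤ c := by
  simpa [expectLaw] using abs_expectLaw_sub_le hP hμ (ψ := 0) (by simpa using h) m

lemma expectLaw_zero (is : Fin 1 → Fin I) (g : Bool → ℝ) (m : Fin M) :
    expectLaw P μ 0 is (fun rs => g (rs 0)) m = ∑ r, bern (μ m (is 0)) r * g r := by
  rw [expectLaw, sum_pi_fin_succ]
  simp [law, mul_comm]

lemma expectLaw_succ (n : ℕ) (is : Fin (n + 2) → Fin I) (φ : (Fin (n + 2) → Bool) → ℝ)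
    (m : Fin M) :
    expectLaw P μ (n + 1) is φ m = ∑ r, bern (μ m (is 0)) r *
      (P *ᵥ expectLaw P μ n (Fin.tail is) fun rs' => φ (Fin.cons r rs')) m := by
  rw [expectLaw, sum_pi_fin_succ]
  refine Finset.sum_congr rfl fun r _ => ?_
  simp only [law_succ, Fin.cons_zero, Fin.tail_cons, mulVec_apply_eq_sum, expectLaw,
    Finset.mul_sum]
  rw [Finset.sum_comm]
  exact Finset.sum_congr rfl fun _ _ => Finset.sum_congr rfl fun _ _ => by ring

end HMM

section Kernel

variable {M I : ℕ} {P : Matrix (Fin M) (Fin M) ℝ} {μ : Fin M → Fin I → ℝ} {α : ℝ}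
  {f : (Fin M → ℝ) → ℝ}

lemma abs_expectLaw_Hiter_sub_le (hP : RowStochastic P) (hμ : ∀ m i, μ m i ∈ Set.Ioo 0 1)
    (hα : HTransformContracts P α) (hα0 : 0 ≤ α)
    (hfLip : ∀ b b', IsBelief b → IsBelief b' → |f b - f b'| ≤ l1 b b')
    (n : ℕ) (is : Fin (n + 1) → Fin I) {b b' : Fin M → ℝ} (hb : IsBelief b) (hb' : IsBelief b')
    (m : Fin M) :
    |expectLaw P μ n is (fun rs => f (Hiter P μ (n + 1) b is rs)) m -
      expectLaw P μ n is (fun rs => f (Hiter P μ (n + 1) b' is rs)) m| ≤ 2 * α ^ (n + 1) := by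
  refine abs_expectLaw_sub_le hP hμ (fun rs => ?_) m
  calc |f (Hiter P μ (n + 1) b is rs) - f (Hiter P μ (n + 1) b' is rs)|
      ≤ α ^ (n + 1) * l1 (posterior P μ n b is rs) (posterior P μ n b' is rs) :=
        (hfLip _ _ (hb.Hiter hP hμ _ _ _) (hb'.Hiter hP hμ _ _ _)).trans
          (l1_Hiter_le hP hμ hα hα0 n is rs hb hb')
    _ ≤ 2 * α ^ (n + 1) := by
        rw [mul_comm]
        exact mul_le_mul_of_nonneg_right
          (l1_le_two_s2 (hb.posterior hP hμ n is rs) (hb'.posterior hP hμ n is rs)) (pow_nonneg hα0 _)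

lemma abs_expectLaw_Hiter_one_state_sub_le (hP : RowStochastic P)
    (hμ : ∀ m i, μ m i ∈ Set.Ioo 0 1) (hα : HTransformContracts P α) (hα0 : 0 ≤ α)
    (hfLip : ∀ b b', IsBelief b → IsBelief b' → |f b - f b'| ≤ l1 b b')
    (is : Fin 1 → Fin I) {b : Fin M → ℝ} (hb : IsBelief b) (m m' : Fin M) :
    |expectLaw P μ 0 is (fun rs => f (Hiter P μ 1 b is rs)) m -
      expectLaw P μ 0 is (fun rs => f (Hiter P μ 1 b is rs)) m'| ≤ 2 * α := by
  have hbayes : ∀ r, IsBelief (reweight b fun m => bern (μ m (is 0)) r) :=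
    fun r => hb.reweight fun m => bern_pos (hμ m (is 0)) r
  have hD : |f (Hupd P μ b (is 0) true) - f (Hupd P μ b (is 0) false)| ≤ 2 * α := by
    refine (hfLip _ _ (hb.Hupd hP hμ _ _) (hb.Hupd hP hμ _ _)).trans ?_
    rw [Hupd_eq_reweight_vecMul, Hupd_eq_reweight_vecMul]
    refine (hα.l1_vecMul_le hP ((hbayes true).2.trans (hbayes false).2.symm)).trans ?_
    rw [mul_comm]
    exact mul_le_mul_of_nonneg_right (l1_le_two_s2 (hbayes true) (hbayes false)) hα0
  have := abs_sum_bern_mul_sub_le (fun m => Set.Ioo_subset_Icc_self (hμ m (is 0)))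
    (u := fun r _ => f (Hupd P μ b (is 0) r)) (A := 0) (by simp) (fun _ => hD) m m'
  rwa [zero_add, ← expectLaw_zero, ← expectLaw_zero] at this

lemma abs_expectLaw_Hiter_succ_state_sub_le (hP : RowStochastic P)
    (hμ : ∀ m i, μ m i ∈ Set.Ioo 0 1) (hα : HTransformContracts P α) (hα0 : 0 ≤ α)
    (hfLip : ∀ b b', IsBelief b → IsBelief b' → |f b - f b'| ≤ l1 b b')
    (hfbdd : ∀ b, IsBelief b → |f b| ≤ 1)
    (n : ℕ) (is : Fin (n + 2) → Fin I) {b : Fin M → ℝ} (hb : IsBelief b) (m m' : Fin M) :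
    |expectLaw P μ (n + 1) is (fun rs => f (Hiter P μ (n + 2) b is rs)) m -
      expectLaw P μ (n + 1) is (fun rs => f (Hiter P μ (n + 2) b is rs)) m'| ≤
        2 * α + 2 * α ^ (n + 1) := by
  set V : Bool → Fin M → ℝ := fun r => expectLaw P μ n (Fin.tail is) fun rs =>
    f (Hiter P μ (n + 1) (Hupd P μ b (is 0) r) (Fin.tail is) rs)
  have hb' : ∀ r, IsBelief (Hupd P μ b (is 0) r) := fun r => hb.Hupd hP hμ _ r
  have hA : ∀ r m m', |(P *ᵥ V r) m - (P *ᵥ V r) m'| ≤ 2 * α := fun r =>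
    hα.abs_mulVec_sub_le hα0 hP
      (abs_expectLaw_le hP hμ fun _ => hfbdd _ ((hb' r).Hiter hP hμ _ _ _))
  have hD : ∀ m, |(P *ᵥ V true) m - (P *ᵥ V false) m| ≤ 2 * α ^ (n + 1) := fun m => by
    rw [← Pi.sub_apply (P *ᵥ V true), ← mulVec_sub]
    exact hP.abs_mulVec_le
      (abs_expectLaw_Hiter_sub_le hP hμ hα hα0 hfLip n _ (hb' true) (hb' false)) m
  simp only [expectLaw_succ, Hiter_succ, Fin.cons_zero, Fin.tail_cons]
  exact abs_sum_bern_mul_sub_le (fun m => Set.Ioo_subset_Icc_self (hμ m (is 0))) hA hD m m'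

lemma sum_abs_sub_mul_Qlaw_le (hP : RowStochastic P) (hμ : ∀ m i, μ m i ∈ Set.Ioo 0 1)
    (hα : HTransformContracts P α) (hα0 : 0 ≤ α)
    (hfLip : ∀ b b', IsBelief b → IsBelief b' → |f b - f b'| ≤ l1 b b')
    (n : ℕ) (is : Fin (n + 1) → Fin I) {b₁ b₂ : Fin M → ℝ} (hb₁ : IsBelief b₁)
    (hb₂ : IsBelief b₂) :
    ∑ rs, |f (Hiter P μ (n + 1) b₁ is rs) - f (Hiter P μ (n + 1) b₂ is rs)| *
      Qlaw P μ n b₁ is rs ≤ 2 * α ^ (n + 1) * l1 b₁ b₂ := by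
  calc _ ≤ ∑ rs, α ^ (n + 1) * (2 * ∑ m, law P μ n m is rs * |b₁ m - b₂ m|) := by
        refine Finset.sum_le_sum fun rs _ => ?_
        have hQ₁ := Qlaw_pos hP hμ hb₁ n is rs
        calc _ ≤ α ^ (n + 1) * l1 (posterior P μ n b₁ is rs) (posterior P μ n b₂ is rs) *
              Qlaw P μ n b₁ is rs :=
              mul_le_mul_of_nonneg_right ((hfLip _ _ (hb₁.Hiter hP hμ _ _ _)
                (hb₂.Hiter hP hμ _ _ _)).trans (l1_Hiter_le hP hμ hα hα0 n is rs hb₁ hb₂)) hQ₁.le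
          _ = α ^ (n + 1) * (Qlaw P μ n b₁ is rs *
              l1 (posterior P μ n b₁ is rs) (posterior P μ n b₂ is rs)) := by ring
          _ ≤ _ := mul_le_mul_of_nonneg_left (mul_l1_reweight_le hb₂.1
              (fun m => (law_pos hP hμ n m is rs).le) hQ₁ (Qlaw_pos hP hμ hb₂ n is rs))
              (pow_nonneg hα0 _)
    _ = 2 * α ^ (n + 1) * l1 b₁ b₂ := by
        rw [← Finset.mul_sum, ← Finset.mul_sum, Finset.sum_comm]
        simp only [← Finset.sum_mul, sum_law hP, one_mul]
        rw [l1]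
        ring

lemma abs_sum_sub_sum_le_of_osc (hP : RowStochastic P) (hμ : ∀ m i, μ m i ∈ Set.Ioo 0 1)
    (hα : HTransformContracts P α) (hα0 : 0 ≤ α)
    (hfLip : ∀ b b', IsBelief b → IsBelief b' → |f b - f b'| ≤ l1 b b')
    (n : ℕ) (is : Fin (n + 1) → Fin I) {b₁ b₂ : Fin M → ℝ} (hb₁ : IsBelief b₁)
    (hb₂ : IsBelief b₂) {K : ℝ}
    (hK : ∀ m m', |expectLaw P μ n is (fun rs => f (Hiter P μ (n + 1) b₂ is rs)) m -
      expectLaw P μ n is (fun rs => f (Hiter P μ (n + 1) b₂ is rs)) m'| ≤ K) :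
    |∑ rs, f (Hiter P μ (n + 1) b₁ is rs) * Qlaw P μ n b₁ is rs -
      ∑ rs, f (Hiter P μ (n + 1) b₂ is rs) * Qlaw P μ n b₂ is rs| ≤
        (2 * α ^ (n + 1) + K / 2) * l1 b₁ b₂ := by
  set g := expectLaw P μ n is fun rs => f (Hiter P μ (n + 1) b₂ is rs)
  have hsplit : ∑ rs, f (Hiter P μ (n + 1) b₁ is rs) * Qlaw P μ n b₁ is rs -
      ∑ rs, f (Hiter P μ (n + 1) b₂ is rs) * Qlaw P μ n b₂ is rs =
      ∑ rs, (f (Hiter P μ (n + 1) b₁ is rs) - f (Hiter P μ (n + 1) b₂ is rs)) *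
        Qlaw P μ n b₁ is rs + ∑ m, (b₁ m - b₂ m) * g m := by
    simp only [sub_mul, Finset.sum_sub_distrib, sum_mul_Qlaw]
    ring
  have hB := abs_sum_mul_le_of_sum_eq_zero (d := fun m => b₁ m - b₂ m)
    (by rw [Finset.sum_sub_distrib, hb₁.2, hb₂.2, sub_self]) hK
  rw [hsplit, add_mul]
  refine (abs_add_le _ _).trans (add_le_add ((Finset.abs_sum_le_sum_abs _ _).trans ?_) hB)
  simpa only [abs_mul, abs_of_pos (Qlaw_pos hP hμ hb₁ n is _)] using
    sum_abs_sub_mul_Qlaw_le hP hμ hα hα0 hfLip n is hb₁ hb₂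

end Kernel

-- The two sums of the main estimate are at most `2y` and `α + x` times `‖b₁ - b₂‖₁`, where
-- `y = αⁿ⁺¹` and `x = αⁿ` (`x = 0` when `n = 0`).
lemma two_mul_add_le_of_le {α x y : ℝ} (hα0 : 0 ≤ α) (hα1 : α < 1) (hx0 : 0 ≤ x)
    (hxα : x ≤ α) (hxy : α * x ≤ y) : 2 * y + (α + x) ≤ 2 / (1 - α) * y + (1 + α) / 2 := by
  have h1α : 0 < 1 - α := by linarith
  have key : 2 * x * ((1 - 2 * α) * (1 + α)) ≤ (1 - α) ^ 2 := by
    rcases le_or_gt (1 / 2) α with h | h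
    · nlinarith [mul_nonneg hx0 (by nlinarith : 0 ≤ (2 * α - 1) * (1 + α))]
    · nlinarith [mul_le_mul_of_nonneg_right hxα (by nlinarith : 0 ≤ (1 - 2 * α) * (1 + α)),
        mul_nonneg hα0 (sq_nonneg (2 * α - 1))]
  rw [div_mul_eq_mul_div, div_add_div _ _ h1α.ne' two_ne_zero, le_div_iff₀ (by positivity)]
  nlinarith

theorem nstep_kernel_lipschitz_general {M I : ℕ} (hM : 2 ≤ M)
    (P : Fin M → Fin M → ℝ) (hP : RowStochastic P)
    (μ : Fin M → Fin I → ℝ) (hμ : ∀ m i, μ m i ∈ Set.Ioo (0 : ℝ) 1)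
    (ε : ℝ) (hε : IsLeast (Set.range fun q : Fin M × Fin M => P q.1 q.2) ε)
    (hε0 : 0 < ε)
    (α C₄ C₅ : ℝ) (hα : α = (1 - 2 * ε) / (1 - ε))
    (hC₄ : C₄ = 2 / (1 - α)) (hC₅ : C₅ = (1 + α) / 2)
    (n : ℕ) (is : Fin (n + 1) → Fin I)
    (b₁ b₂ : Fin M → ℝ) (hb₁ : IsBelief b₁) (hb₂ : IsBelief b₂)
    (f : (Fin M → ℝ) → ℝ)
    (hfLip : ∀ b b', IsBelief b → IsBelief b' → |f b - f b'| ≤ l1 b b')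
    (hfbdd : ∀ b, IsBelief b → |f b| ≤ 1) :
    |(∑ rs : Fin (n + 1) → Bool,
        f (Hiter P μ (n + 1) b₁ is rs) * Qlaw P μ n b₁ is rs) -
     (∑ rs : Fin (n + 1) → Bool,
        f (Hiter P μ (n + 1) b₂ is rs) * Qlaw P μ n b₂ is rs)| ≤
      (C₄ * α ^ (n + 1) + C₅) * l1 b₁ b₂ := by
  have hεP : ∀ m m', ε ≤ P m m' := fun m m' => hε.2 ⟨(m, m'), rfl⟩
  have hPε : ∀ m m', P m m' ∈ Set.Icc ε (1 - ε) :=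
    fun m m' => ⟨hεP m m', hP.le_one_sub hM hεP m m'⟩
  have hε1 : ε ≤ 1 - ε := (hPε ⟨0, by omega⟩ ⟨0, by omega⟩).1.trans (hPε _ _).2
  have hα0 : 0 ≤ α := hα ▸ div_nonneg (by linarith) (by linarith)
  have hα1 : α < 1 := hα ▸ (div_lt_one (by linarith)).2 (by linarith)
  have hcontr : HTransformContracts P α := hα ▸ hTransformContracts_of_mem_Icc hP hε0.le hPε
  have hl1 : 0 ≤ l1 b₁ b₂ := Finset.sum_nonneg fun _ _ => abs_nonneg _
  subst hC₄ hC₅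
  rcases n with _ | n
  · refine (abs_sum_sub_sum_le_of_osc hP hμ hcontr hα0 hfLip 0 is hb₁ hb₂
      (abs_expectLaw_Hiter_one_state_sub_le hP hμ hcontr hα0 hfLip is hb₂)).trans ?_
    have := two_mul_add_le_of_le hα0 hα1 le_rfl hα0 (y := α ^ 1) (by simpa using hα0)
    exact mul_le_mul_of_nonneg_right (by linarith) hl1
  · refine (abs_sum_sub_sum_le_of_osc hP hμ hcontr hα0 hfLip (n + 1) is hb₁ hb₂
      (abs_expectLaw_Hiter_succ_state_sub_le hP hμ hcontr hα0 hfLip hfbdd n is hb₂)).trans ?_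
    have := two_mul_add_le_of_le hα0 hα1 (pow_nonneg hα0 (n + 1))
      (pow_le_of_le_one hα0 hα1.le n.succ_ne_zero) (pow_succ' α (n + 1)).ge
    exact mul_le_mul_of_nonneg_right (by linarith) hl1

/-- the n-step belief transition kernel is Lipschitz in the initial
belief, uniformly over action sequences, with module at most `C₄ α^n + C₅`. -/
theorem nstep_kernel_lipschitz {M I : ℕ} (hM : 2 ≤ M) (hI : 0 < I)
    (P : Fin M → Fin M → ℝ) (hP : RowStochastic P)
    (μ : Fin M → Fin I → ℝ) (hμ : ∀ m i, μ m i ∈ Set.Ioo (0 : ℝ) 1)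
    (ε : ℝ) (hε : IsLeast (Set.range fun q : Fin M × Fin M => P q.1 q.2) ε)
    (hε0 : 0 < ε) (hεhalf : ε ≤ 1 / 2)
    (α C₄ C₅ : ℝ) (hα : α = (1 - 2 * ε) / (1 - ε))
    (hC₄ : C₄ = 2 / (1 - α)) (hC₅ : C₅ = (1 + α) / 2)
    (n : ℕ) (is : Fin (n + 1) → Fin I)
    (b₁ b₂ : Fin M → ℝ) (hb₁ : IsBelief b₁) (hb₂ : IsBelief b₂)
    (f : (Fin M → ℝ) → ℝ)
    (hfLip : ∀ b b', IsBelief b → IsBelief b' → |f b - f b'| ≤ l1 b b')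
    (hfbdd : ∀ b, IsBelief b → |f b| ≤ 1) :
    |(∑ rs : Fin (n + 1) → Bool,
        f (Hiter P μ (n + 1) b₁ is rs) * Qlaw P μ n b₁ is rs) -
     (∑ rs : Fin (n + 1) → Bool,
        f (Hiter P μ (n + 1) b₂ is rs) * Qlaw P μ n b₂ is rs)| ≤
      (C₄ * α ^ (n + 1) + C₅) * l1 b₁ b₂ :=
  nstep_kernel_lipschitz_general hM P hP μ hμ ε hε hε0 α C₄ C₅ hα hC₄ hC₅ n is b₁ b₂ hb₁ hb₂ f hfLip
    hfbdd
end

section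
/- Let τ₁ > 0 and τ₂ > 0 be real parameters, let K ≥ 2 be an integer, and let T > 0 be a real number satisfying Σ_{k=1}^{K−1} (τ₁ + τ₂·√k) ≤ T ≤ Σ_{k=1}^{K} (τ₁ + τ₂·√k). Then the number of episodes K satisfies (T/(τ₁+τ₂))^{2/3} ≤ K ≤ 3·(T/τ₂)^{2/3}. -/
lemma rpow_three_halves_eq (c : ℝ) (hc : 0 ≤ c) :
    c ^ ((3:ℝ)/2) = Real.sqrt c ^ 3 := by
  rw [Real.sqrt_eq_rpow, ← Real.rpow_natCast (c ^ ((1:ℝ)/2)) 3, ← Real.rpow_mul hc]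
  norm_num

lemma sqrt_step (n : ℕ) :
    ((n+1 : ℕ) : ℝ) ^ ((3:ℝ)/2) - (n : ℝ) ^ ((3:ℝ)/2)
      ≤ (3/2) * Real.sqrt ((n+1 : ℕ) : ℝ) := by
  set x := Real.sqrt (n : ℝ) with hxdef
  set y := Real.sqrt ((n+1 : ℕ) : ℝ) with hydef
  have hx : 0 ≤ x := Real.sqrt_nonneg _
  have hy : 0 ≤ y := Real.sqrt_nonneg _
  have hx2 : x ^ 2 = (n : ℝ) := Real.sq_sqrt (by positivity)
  have hy2 : y ^ 2 = (n : ℝ) + 1 := by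
    rw [hydef]; push_cast; rw [Real.sq_sqrt (by positivity)]
  rw [rpow_three_halves_eq _ (by positivity), rpow_three_halves_eq _ (by positivity)]
  nlinarith [sq_nonneg (y - x), sq_nonneg (x + y), mul_nonneg hx hy,
    sq_nonneg (2*x^2 - 1), mul_nonneg (mul_nonneg hx hy) hx,
    mul_nonneg (mul_nonneg hx hx) hx, sq_nonneg (x*y - 1), sq_nonneg (x - y)]

lemma sum_sqrt_ge (n : ℕ) :
    (2/3) * (n : ℝ) ^ ((3:ℝ)/2) ≤ ∑ k ∈ Finset.Icc 1 n, Real.sqrt (k : ℝ) := by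
  induction n with
  | zero => simp [Real.zero_rpow]
  | succ n ih =>
    rw [Finset.sum_Icc_succ_top (by omega)]
    have := sqrt_step n
    linarith

/-- bounds on the number of episodes `K` of the SEEU algorithm
within a horizon of length `T`, where episode `k` has length `τ₁ + τ₂ √k`. -/
theorem episode_count_bound (τ₁ τ₂ T : ℝ) (hτ₁ : 0 < τ₁) (hτ₂ : 0 < τ₂)
    (hT : 0 < T) (K : ℕ) (hK : 2 ≤ K)
    (hlow : ∑ k ∈ Finset.Icc 1 (K - 1), (τ₁ + τ₂ * Real.sqrt (k : ℝ)) ≤ T)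
    (hhigh : T ≤ ∑ k ∈ Finset.Icc 1 K, (τ₁ + τ₂ * Real.sqrt (k : ℝ))) :
    (T / (τ₁ + τ₂)) ^ ((2 : ℝ) / 3) ≤ (K : ℝ) ∧
      (K : ℝ) ≤ 3 * (T / τ₂) ^ ((2 : ℝ) / 3) := by
  have hK1 : (1:ℝ) ≤ (K:ℝ) := by exact_mod_cast Nat.one_le_of_lt hK
  have hK0 : (0:ℝ) ≤ (K:ℝ) := by linarith
  constructor
  · -- lower bound
    have hterm : ∀ k ∈ Finset.Icc 1 K, τ₁ + τ₂ * Real.sqrt (k : ℝ) ≤ τ₁ + τ₂ * Real.sqrt (K : ℝ) := by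
      intro k hk
      have hkK : (k:ℝ) ≤ (K:ℝ) := by
        exact_mod_cast (Finset.mem_Icc.mp hk).2
      have := Real.sqrt_le_sqrt hkK
      nlinarith
    have hsum : ∑ k ∈ Finset.Icc 1 K, (τ₁ + τ₂ * Real.sqrt (k : ℝ))
        ≤ (K : ℝ) * (τ₁ + τ₂ * Real.sqrt (K : ℝ)) := by
      have := Finset.sum_le_card_nsmul _ _ _ hterm
      simpa [Nat.card_Icc, nsmul_eq_mul, mul_add] using this
    have hKsqrt : (K:ℝ) * Real.sqrt (K:ℝ) = (K:ℝ) ^ ((3:ℝ)/2) := by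
      rw [rpow_three_halves_eq _ hK0]
      have := Real.sq_sqrt hK0
      nlinarith [Real.sqrt_nonneg (K:ℝ)]
    have hKle : (K:ℝ) ≤ (K:ℝ) ^ ((3:ℝ)/2) := by
      calc (K:ℝ) = (K:ℝ) ^ (1:ℝ) := (Real.rpow_one _).symm
        _ ≤ (K:ℝ) ^ ((3:ℝ)/2) := Real.rpow_le_rpow_of_exponent_le hK1 (by norm_num)
    have hT3 : T ≤ (τ₁ + τ₂) * (K:ℝ) ^ ((3:ℝ)/2) := by
      have : (K : ℝ) * (τ₁ + τ₂ * Real.sqrt (K : ℝ))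
          = (K:ℝ) * τ₁ + τ₂ * ((K:ℝ) * Real.sqrt (K:ℝ)) := by ring
      nlinarith
    have hdiv : T / (τ₁ + τ₂) ≤ (K:ℝ) ^ ((3:ℝ)/2) := by
      rw [div_le_iff₀ (by linarith)]
      linarith
    calc (T / (τ₁ + τ₂)) ^ ((2:ℝ)/3)
        ≤ ((K:ℝ) ^ ((3:ℝ)/2)) ^ ((2:ℝ)/3) :=
          Real.rpow_le_rpow (by positivity) hdiv (by norm_num)
      _ = (K:ℝ) := by
          rw [← Real.rpow_mul hK0]; norm_num
  · -- upper bound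
    have hcast : ((K - 1 : ℕ) : ℝ) = (K:ℝ) - 1 := by
      have : (1:ℕ) ≤ K := by omega
      push_cast [this]; ring
    have hs := sum_sqrt_ge (K - 1)
    have hT2 : τ₂ * ∑ k ∈ Finset.Icc 1 (K-1), Real.sqrt (k:ℝ) ≤ T := by
      rw [Finset.mul_sum]
      refine le_trans (Finset.sum_le_sum fun k _ => ?_) hlow
      nlinarith [Real.sqrt_nonneg (k:ℝ)]
    have hhalf : (K:ℝ)/2 ≤ ((K - 1 : ℕ) : ℝ) := by
      rw [hcast]
      have : (2:ℝ) ≤ (K:ℝ) := by exact_mod_cast hK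
      linarith
    have hbase : ((K:ℝ)/2) ^ ((3:ℝ)/2) ≤ ((K - 1 : ℕ) : ℝ) ^ ((3:ℝ)/2) :=
      Real.rpow_le_rpow (by positivity) hhalf (by norm_num)
    have hTd : (2/3) * ((K:ℝ)/2) ^ ((3:ℝ)/2) ≤ T / τ₂ := by
      rw [le_div_iff₀ hτ₂]
      nlinarith
    have hmono : ((2/3) * ((K:ℝ)/2) ^ ((3:ℝ)/2)) ^ ((2:ℝ)/3) ≤ (T/τ₂) ^ ((2:ℝ)/3) :=
      Real.rpow_le_rpow (by positivity) hTd (by norm_num)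
    have hcomp : ((2/3 : ℝ) * ((K:ℝ)/2) ^ ((3:ℝ)/2)) ^ ((2:ℝ)/3)
        = (2/3 : ℝ) ^ ((2:ℝ)/3) * ((K:ℝ)/2) := by
      rw [Real.mul_rpow (by norm_num) (by positivity), ← Real.rpow_mul (by positivity)]
      norm_num
    have h23 : (2/3 : ℝ) ≤ (2/3 : ℝ) ^ ((2:ℝ)/3) := by
      calc (2/3 : ℝ) = (2/3 : ℝ) ^ (1:ℝ) := (Real.rpow_one _).symm
        _ ≤ (2/3 : ℝ) ^ ((2:ℝ)/3) :=
          Real.rpow_le_rpow_of_exponent_ge (by norm_num) (by norm_num) (by norm_num)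
    have : (2/3 : ℝ) * ((K:ℝ)/2) ≤ (T/τ₂) ^ ((2:ℝ)/3) := by
      rw [hcomp] at hmono
      nlinarith
    linarith
end
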